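/- arXiv:1811.08658 — 13 statements merged into one kernel-verified Lean document; each statement's English description precedes it below -/
import Mathlib

section
/- Let n ≥ 2 and let B_v be the closed unit ball of the variation norm ‖x‖_v := max_i x_i − min_i x_i on V_0 := {x ∈ ℝⁿ : x_n = 0}. Then the illumination number of B_v equals the binomial coefficient C(n, ⌈n/2⌉): the minimum cardinality of a finite set S ⊆ V_0 such that for every z ∈ V_0 with ‖z‖_v = 1 there exists v ∈ S and ε > 0 with ‖z + λv‖_v < 1 for all 0 < λ < ε, is exactly C(n, ⌈n/2⌉). -/
/-- The variation seminorm `max_i x_i - min_i x_i` on `ℝⁿ` (a norm on `V0`). -/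
noncomputable def vnorm (n : ℕ) (x : Fin n → ℝ) : ℝ := (⨆ i, x i) - (⨅ i, x i)

/-- The norm `‖x‖_H = max(max_i x_i, 0) - min(min_i x_i, 0)` on `ℝᵐ`. -/
noncomputable def Hnorm (m : ℕ) (x : Fin m → ℝ) : ℝ :=
  max (⨆ i, x i) 0 - min (⨅ i, x i) 0

/-- Hilbert's (projective) metric on the open positive cone. -/
noncomputable def dH (n : ℕ) (x y : Fin n → ℝ) : ℝ :=
  Real.log (⨆ i, x i / y i) - Real.log (⨅ i, x i / y i)

/-- `V0 = {x ∈ ℝⁿ : x_n = 0}` (the last coordinate vanishes). -/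
def V0 (n : ℕ) : Set (Fin n → ℝ) := {x | ∀ i : Fin n, (i : ℕ) = n - 1 → x i = 0}

/-- `v` illuminates `z` (a point of the unit sphere of the norm `nrm`). -/
def illum (m : ℕ) (nrm : (Fin m → ℝ) → ℝ) (v z : Fin m → ℝ) : Prop :=
  ∃ ε > 0, ∀ l : ℝ, 0 < l → l < ε → nrm (z + l • v) < 1

/-! On the unit sphere, `v` illuminates `z` exactly when `v` is smaller on every maximal
coordinate of `z` than on every minimal one. For a nonempty proper set `D` of coordinates the
indicator of `D` (shifted into `V0`) has maximal set `D` and minimal set its complement, so an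
illuminating set needs, for every `D` of size `⌈n/2⌉`, a vector that is smaller on `D` than off
`D`; such a vector serves at most one set of an antichain, which gives the lower bound.
Conversely, a vector serves each of its strict sublevel sets, which form a chain of subsets, and
every point of the sphere is served by a vector serving its maximal set. The symmetric chain
decomposition of de Bruijn, Tengbergen and Kruyswijk covers all subsets of `{0, …, n-1}` by
`C(n, ⌈n/2⌉)` chains, each realised by one vector. -/

open Finset Filter Topology

section Variation

variable {n : ℕ}

lemma sub_le_vnorm (x : Fin n → ℝ) (i j : Fin n) : x i - x j ≤ vnorm n x :=
  sub_le_sub (le_ciSup (Set.finite_range x).bddAbove i) (ciInf_le (Set.finite_range x).bddBelow j)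

lemma exists_vnorm_eq_sub [NeZero n] (x : Fin n → ℝ) : ∃ i j, vnorm n x = x i - x j := by
  obtain ⟨i, hi⟩ := Finite.exists_max x
  obtain ⟨j, hj⟩ := Finite.exists_min x
  exact ⟨i, j, congr_arg₂ (· - ·)
    (le_antisymm (ciSup_le hi) (le_ciSup (Set.finite_range x).bddAbove i))
    (le_antisymm (ciInf_le (Set.finite_range x).bddBelow j) (le_ciInf hj))⟩

lemma vnorm_lt_iff [NeZero n] {x : Fin n → ℝ} {c : ℝ} : vnorm n x < c ↔ ∀ i j, x i - x j < c := by
  obtain ⟨i, j, h⟩ := exists_vnorm_eq_sub x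
  exact ⟨fun hc i j => (sub_le_vnorm x i j).trans_lt hc, fun hc => h ▸ hc i j⟩

lemma vnorm_eq_of_sub_eq {x : Fin n → ℝ} {c : ℝ} (hle : ∀ i j, x i - x j ≤ c) {i j : Fin n}
    (h : x i - x j = c) : vnorm n x = c := by
  have : NeZero n := ⟨by rintro rfl; exact i.elim0⟩
  obtain ⟨i', j', h'⟩ := exists_vnorm_eq_sub x
  exact le_antisymm (h' ▸ hle i' j') (h ▸ sub_le_vnorm x i j)

lemma sub_apply_last_mem_V0 [NeZero n] (x : Fin n → ℝ) :
    (fun i => x i - x ⟨n - 1, Nat.sub_one_lt (NeZero.ne n)⟩) ∈ V0 n := by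
  intro i hi
  rw [show i = ⟨n - 1, Nat.sub_one_lt (NeZero.ne n)⟩ from Fin.ext hi]
  exact sub_self _

end Variation

lemma illum_iff_eventually {m : ℕ} {nrm : (Fin m → ℝ) → ℝ} {v z : Fin m → ℝ} :
    illum m nrm v z ↔ ∀ᶠ l in 𝓝[>] (0 : ℝ), nrm (z + l • v) < 1 := by
  simp only [(nhdsGT_basis (0 : ℝ)).eventually_iff, illum, Set.mem_Ioo, and_imp]

/-- On the unit sphere, `z i - z j = 1` says that `i` is a maximal and `j` a minimal coordinate
of `z`. -/
lemma illum_vnorm_iff {n : ℕ} [NeZero n] {v z : Fin n → ℝ} (hz : vnorm n z = 1) :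
    illum n (vnorm n) v z ↔ ∀ i j, z i - z j = 1 → v i < v j := by
  have hdiff : ∀ (l : ℝ) i j, (z + l • v) i - (z + l • v) j = z i - z j + l * (v i - v j) := by
    intro l i j; simp only [Pi.add_apply, Pi.smul_apply, smul_eq_mul]; ring
  simp only [illum_iff_eventually, vnorm_lt_iff, hdiff]
  constructor
  · intro h i j hij
    obtain ⟨l, hl, hl0⟩ := (h.and self_mem_nhdsWithin).exists
    have := hl i j
    rw [hij] at this
    exact sub_neg.mp (neg_of_mul_neg_right (by linarith) (le_of_lt hl0))
  · intro h
    simp only [eventually_all]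
    intro i j
    rcases (hz ▸ sub_le_vnorm z i j).lt_or_eq with hlt | heq
    · have hcont : Tendsto (fun l : ℝ => z i - z j + l * (v i - v j)) (𝓝[>] 0) (𝓝 (z i - z j)) := by
        refine tendsto_nhdsWithin_of_tendsto_nhds ?_
        simpa using ((continuous_id.mul continuous_const).const_add _).tendsto' (0 : ℝ) _ (by simp)
      exact hcont.eventually_lt_const hlt
    · filter_upwards [self_mem_nhdsWithin] with l hl
      nlinarith [h i j heq, Set.mem_Ioi.mp hl]


section Chains

/-- A chain of subsets of `ℕ` is encoded by its bottom `A` and the disjoint set `U` of elements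
it adds, in increasing order; `chainAt A U s` is its member containing exactly the elements of `U`
below `s`. -/
def chainAt (A U : Finset ℕ) (s : ℕ) : Finset ℕ := A ∪ U.filter (· < s)

variable {A U : Finset ℕ} {n s : ℕ}

lemma chainAt_zero : chainAt A U 0 = A := by simp [chainAt]

lemma chainAt_subset_union : chainAt A U s ⊆ A ∪ U :=
  union_subset_union_right (filter_subset _ _)

lemma chainAt_of_forall_lt (h : ∀ x ∈ U, x < s) : chainAt A U s = A ∪ U := by
  rw [chainAt, filter_true_of_mem h]

lemma card_chainAt_succ_le : #(chainAt A U (s + 1)) ≤ #(chainAt A U s) + 1 := by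
  refine (card_le_card fun x hx => ?_).trans (card_insert_le s _)
  simp only [chainAt, mem_union, mem_filter, mem_insert] at hx ⊢
  rcases hx with hx | ⟨hx, hlt⟩
  · exact Or.inr (Or.inl hx)
  · rcases Nat.lt_succ_iff_lt_or_eq.mp hlt with hlt | rfl
    · exact Or.inr (Or.inr ⟨hx, hlt⟩)
    · exact Or.inl rfl

lemma chainAt_insert_of_le (hs : s ≤ n) :
    chainAt A (insert n U) s = chainAt A U s := by
  rw [chainAt, chainAt, filter_insert, if_neg (by omega)]

lemma chainAt_insert_of_lt (hU : U ⊆ range n) (hs : n < s) :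
    chainAt A (insert n U) s = insert n (A ∪ U) := by
  rw [chainAt_of_forall_lt, union_insert]
  intro x hx
  rcases mem_insert.mp hx with rfl | hx
  · exact hs
  · exact (mem_range.mp (hU hx)).trans hs

lemma chainAt_insert_erase_sup :
    chainAt (insert n A) (U.erase (U.sup id)) s = insert n (chainAt A U (min s (U.sup id))) := by
  ext x
  have hle : x ∈ U → x ≤ U.sup id := fun hx => le_sup (f := id) hx
  simp only [chainAt, mem_union, mem_insert, mem_filter, mem_erase]
  constructor
  · rintro ((h | h) | ⟨⟨hne, hx⟩, hlt⟩)
    · exact Or.inl h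
    · exact Or.inr (Or.inl h)
    · exact Or.inr (Or.inr ⟨hx, lt_min hlt (lt_of_le_of_ne (hle hx) hne)⟩)
  · rintro (h | h | ⟨hx, hlt⟩)
    · exact Or.inl (Or.inl h)
    · exact Or.inl (Or.inr h)
    · exact Or.inr ⟨⟨(lt_min_iff.mp hlt).2.ne, hx⟩, (lt_min_iff.mp hlt).1⟩

lemma sup_id_mem (hU : U.Nonempty) : U.sup id ∈ U := by
  obtain ⟨m, hm, hme⟩ := exists_mem_eq_sup U hU id
  exact hme ▸ hm

lemma sup_id_notMem_chainAt (hAU : Disjoint A U) (hU : U.Nonempty) (hs : s ≤ U.sup id) :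
    U.sup id ∉ chainAt A U s := by
  simp only [chainAt, mem_union, mem_filter, not_or, not_and, not_lt]
  exact ⟨disjoint_right.mp hAU (sup_id_mem hU), fun _ => hs⟩

lemma exists_eq_of_le_add_one {g : ℕ → ℕ} (hg : ∀ s, g (s + 1) ≤ g s + 1) {k : ℕ} (N : ℕ)
    (h0 : g 0 ≤ k) (hN : k ≤ g N) : ∃ s, g s = k := by
  induction N with
  | zero => exact ⟨0, le_antisymm h0 hN⟩
  | succ N ih =>
    by_cases h : k ≤ g N
    · exact ih h
    · exact ⟨N + 1, by have := hg N; omega⟩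

lemma exists_card_chainAt_eq (hAU : Disjoint A U) {k : ℕ} (hA : #A ≤ k) (hk : k ≤ #A + #U) :
    ∃ s, #(chainAt A U s) = k := by
  refine exists_eq_of_le_add_one (fun _ => card_chainAt_succ_le) (U.sup id + 1) ?_ ?_
  · rwa [chainAt_zero]
  · rwa [chainAt_of_forall_lt fun x hx => Nat.lt_succ_of_le (le_sup (f := id) hx),
      card_union_of_disjoint hAU]

lemma chainAt_min_of_subset_range (hU : U ⊆ range n) : chainAt A U (min s n) = chainAt A U s := by
  rcases le_total s n with h | h
  · rw [min_eq_left h]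
  · have hlt : ∀ t ≥ n, ∀ x ∈ U, x < t := fun t ht x hx => (mem_range.mp (hU hx)).trans_le ht
    rw [min_eq_right h, chainAt_of_forall_lt (hlt n le_rfl), chainAt_of_forall_lt (hlt s h)]

end Chains

structure IsSymmChainDecomp (n : ℕ) (P : Finset (Finset ℕ × Finset ℕ)) : Prop where
  disjoint : ∀ p ∈ P, Disjoint p.1 p.2
  union_subset_range : ∀ p ∈ P, p.1 ∪ p.2 ⊆ range n
  two_mul_card_add_card : ∀ p ∈ P, 2 * #p.1 + #p.2 = n
  exists_chainAt_eq : ∀ D ⊆ range n, ∃ p ∈ P, ∃ s, chainAt p.1 p.2 s = D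
  eq_of_chainAt_eq : ∀ p ∈ P, ∀ q ∈ P, ∀ s t, chainAt p.1 p.2 s = chainAt q.1 q.2 t → p = q

def extendChain (n : ℕ) (p : Finset ℕ × Finset ℕ) : Finset ℕ × Finset ℕ := (p.1, insert n p.2)

def shrinkChain (n : ℕ) (p : Finset ℕ × Finset ℕ) : Finset ℕ × Finset ℕ :=
  (insert n p.1, p.2.erase (p.2.sup id))

/-- The inductive step of de Bruijn, Tengbergen and Kruyswijk: a chain `C₀ ⊂ ⋯ ⊂ Cₖ` yields
`C₀ ⊂ ⋯ ⊂ Cₖ ⊂ Cₖ ∪ {n}` and, if `k > 0`, `C₀ ∪ {n} ⊂ ⋯ ⊂ Cₖ₋₁ ∪ {n}`. -/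
def succChains (n : ℕ) (P : Finset (Finset ℕ × Finset ℕ)) : Finset (Finset ℕ × Finset ℕ) :=
  P.image (extendChain n) ∪ (P.filter fun p => p.2.Nonempty).image (shrinkChain n)

lemma mem_succChains {n : ℕ} {P : Finset (Finset ℕ × Finset ℕ)} {p' : Finset ℕ × Finset ℕ} :
    p' ∈ succChains n P ↔
      (∃ p ∈ P, extendChain n p = p') ∨ ∃ p ∈ P, p.2.Nonempty ∧ shrinkChain n p = p' := by
  simp [succChains, and_assoc]

namespace IsSymmChainDecomp

variable {n : ℕ} {P : Finset (Finset ℕ × Finset ℕ)} {p : Finset ℕ × Finset ℕ}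

lemma notMem_union (hP : IsSymmChainDecomp n P) (hp : p ∈ P) : n ∉ p.1 ∪ p.2 :=
  fun h => by simpa using hP.union_subset_range p hp h

lemma snd_subset_range (hP : IsSymmChainDecomp n P) (hp : p ∈ P) : p.2 ⊆ range n :=
  subset_union_right.trans (hP.union_subset_range p hp)

lemma erase_chainAt_extendChain (hP : IsSymmChainDecomp n P) (hp : p ∈ P) (s : ℕ) :
    (chainAt p.1 (insert n p.2) s).erase n = chainAt p.1 p.2 (min s n) := by
  rcases le_or_gt s n with h | h
  · rw [chainAt_insert_of_le h, min_eq_left h]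
    exact erase_eq_of_notMem fun hn => hP.notMem_union hp (chainAt_subset_union hn)
  · rw [chainAt_insert_of_lt (hP.snd_subset_range hp) h, erase_insert (hP.notMem_union hp),
      chainAt_min_of_subset_range (hP.snd_subset_range hp),
      chainAt_of_forall_lt fun x hx => (mem_range.mp (hP.snd_subset_range hp hx)).trans h]

lemma erase_chainAt_shrinkChain (hP : IsSymmChainDecomp n P) (hp : p ∈ P) (s : ℕ) :
    (chainAt (insert n p.1) (p.2.erase (p.2.sup id)) s).erase n =
      chainAt p.1 p.2 (min s (p.2.sup id)) := by
  rw [chainAt_insert_erase_sup, erase_insert fun hn => hP.notMem_union hp (chainAt_subset_union hn)]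

lemma chainAt_extendChain_ne_shrinkChain (hP : IsSymmChainDecomp n P) (hp : p ∈ P)
    (hne : p.2.Nonempty) (s t : ℕ) :
    chainAt p.1 (insert n p.2) s ≠ chainAt (insert n p.1) (p.2.erase (p.2.sup id)) t := by
  intro h
  rw [chainAt_insert_erase_sup] at h
  have hs : n < s := by
    have hn := h ▸ mem_insert_self n _
    simp only [chainAt, mem_union, mem_filter, mem_insert] at hn
    exact (hn.resolve_left fun hn => hP.notMem_union hp (mem_union_left _ hn)).2
  rw [chainAt_insert_of_lt (hP.snd_subset_range hp) hs] at h
  have hm := sup_id_mem hne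
  rcases mem_insert.mp (h ▸ mem_insert_of_mem (mem_union_right _ hm)) with hmn | hmc
  · exact hP.notMem_union hp (mem_union_right _ (hmn ▸ hm))
  · exact sup_id_notMem_chainAt (hP.disjoint p hp) hne (min_le_right _ _) hmc

lemma exists_chainAt_eq_succ (hP : IsSymmChainDecomp n P) :
    ∀ D ⊆ range (n + 1), ∃ p ∈ succChains n P, ∃ s, chainAt p.1 p.2 s = D := by
  intro D hD
  have hD' : D.erase n ⊆ range n := subset_insert_iff.mp (range_add_one ▸ hD)
  by_cases hnD : n ∈ D
  · obtain ⟨p, hp, s, hs⟩ := hP.exists_chainAt_eq (D.erase n) hD'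
    by_cases htop : chainAt p.1 p.2 s = p.1 ∪ p.2
    · refine ⟨extendChain n p, mem_succChains.mpr (Or.inl ⟨p, hp, rfl⟩), n + 1, ?_⟩
      rw [extendChain, chainAt_insert_of_lt (hP.snd_subset_range hp) n.lt_succ_self, ← htop, hs,
        insert_erase hnD]
    · have hsm : s ≤ p.2.sup id := by
        by_contra hlt
        exact htop (chainAt_of_forall_lt fun x hx => (le_sup (f := id) hx).trans_lt (by omega))
      have hne : p.2.Nonempty := by
        by_contra hemp
        simp [not_nonempty_iff_eq_empty.mp hemp, chainAt] at htop
      refine ⟨shrinkChain n p, mem_succChains.mpr (Or.inr ⟨p, hp, hne, rfl⟩), s, ?_⟩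
      rw [shrinkChain, chainAt_insert_erase_sup, min_eq_left hsm, hs, insert_erase hnD]
  · obtain ⟨p, hp, s, hs⟩ := hP.exists_chainAt_eq D (erase_eq_of_notMem hnD ▸ hD')
    refine ⟨extendChain n p, mem_succChains.mpr (Or.inl ⟨p, hp, rfl⟩), min s n, ?_⟩
    rw [extendChain, chainAt_insert_of_le (min_le_right _ _),
      chainAt_min_of_subset_range (hP.snd_subset_range hp), hs]

lemma eq_of_chainAt_eq_succ (hP : IsSymmChainDecomp n P) :
    ∀ p ∈ succChains n P, ∀ q ∈ succChains n P, ∀ s t,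
      chainAt p.1 p.2 s = chainAt q.1 q.2 t → p = q := by
  intro p' hp' q' hq' s t h
  rcases mem_succChains.mp hp' with ⟨p, hp, rfl⟩ | ⟨p, hp, hpne, rfl⟩ <;>
    rcases mem_succChains.mp hq' with ⟨q, hq, rfl⟩ | ⟨q, hq, hqne, rfl⟩ <;>
    simp only [extendChain, shrinkChain] at h ⊢
  -- erasing `n` turns both members into members of chains of `P`, which must then coincide
  all_goals
    have hpq := congr_arg (Finset.erase · n) h
    simp only [hP.erase_chainAt_extendChain, hP.erase_chainAt_shrinkChain, hp, hq] at hpq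
    obtain rfl := hP.eq_of_chainAt_eq p hp q hq _ _ hpq
  · rfl
  · exact absurd h (hP.chainAt_extendChain_ne_shrinkChain hp hqne s t)
  · exact absurd h.symm (hP.chainAt_extendChain_ne_shrinkChain hp hpne t s)
  · rfl

lemma succ (hP : IsSymmChainDecomp n P) : IsSymmChainDecomp (n + 1) (succChains n P) where
  disjoint p' hp' := by
    rcases mem_succChains.mp hp' with ⟨p, hp, rfl⟩ | ⟨p, hp, -, rfl⟩
    · exact disjoint_insert_right.mpr
        ⟨fun hn => hP.notMem_union hp (mem_union_left _ hn), hP.disjoint p hp⟩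
    · exact disjoint_insert_left.mpr
        ⟨fun hn => hP.notMem_union hp (mem_union_right _ (mem_of_mem_erase hn)),
          (hP.disjoint p hp).mono_right (erase_subset _ _)⟩
  union_subset_range p' hp' := by
    rw [range_add_one]
    rcases mem_succChains.mp hp' with ⟨p, hp, rfl⟩ | ⟨p, hp, -, rfl⟩
    · rw [extendChain, union_insert]
      exact insert_subset_insert _ (hP.union_subset_range p hp)
    · rw [shrinkChain, insert_union]
      exact insert_subset_insert _
        ((union_subset_union_right (erase_subset _ _)).trans (hP.union_subset_range p hp))
  two_mul_card_add_card p' hp' := by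
    have hn : ∀ p ∈ P, n ∉ p.1 ∧ n ∉ p.2 := fun p hp => by
      simpa only [mem_union, not_or] using hP.notMem_union hp
    rcases mem_succChains.mp hp' with ⟨p, hp, rfl⟩ | ⟨p, hp, hne, rfl⟩
    · have := hP.two_mul_card_add_card p hp
      dsimp only [extendChain]
      rw [card_insert_of_notMem (hn p hp).2]
      omega
    · have := hP.two_mul_card_add_card p hp
      have := card_pos.mpr hne
      dsimp only [shrinkChain]
      rw [card_insert_of_notMem (hn p hp).1, card_erase_of_mem (sup_id_mem hne)]
      omega
  exists_chainAt_eq := hP.exists_chainAt_eq_succ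
  eq_of_chainAt_eq := hP.eq_of_chainAt_eq_succ

lemma card_le_choose (hP : IsSymmChainDecomp n P) : #P ≤ n.choose ((n + 1) / 2) := by
  calc #P ≤ #(powersetCard ((n + 1) / 2) (range n)) := by
        refine card_le_card_of_forall_subsingleton (fun p D => ∃ s, chainAt p.1 p.2 s = D) ?_ ?_
        · intro p hp
          have := hP.two_mul_card_add_card p hp
          obtain ⟨s, hs⟩ := exists_card_chainAt_eq (hP.disjoint p hp) (k := (n + 1) / 2)
            (by omega) (by omega)
          exact ⟨_, mem_powersetCard.mpr
            ⟨chainAt_subset_union.trans (hP.union_subset_range p hp), hs⟩, s, rfl⟩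
        · rintro D - p ⟨hp, s, hs⟩ q ⟨hq, t, ht⟩
          exact hP.eq_of_chainAt_eq p hp q hq s t (hs.trans ht.symm)
    _ = n.choose ((n + 1) / 2) := by rw [card_powersetCard, card_range]

end IsSymmChainDecomp

lemma exists_isSymmChainDecomp (n : ℕ) : ∃ P, IsSymmChainDecomp n P := by
  induction n with
  | zero =>
    refine ⟨{(∅, ∅)}, ?_, ?_, ?_, ?_, ?_⟩ <;> simp [chainAt]
  | succ n ih =>
    obtain ⟨P, hP⟩ := ih
    exact ⟨_, hP.succ⟩

noncomputable def chainWeight (n : ℕ) (p : Finset ℕ × Finset ℕ) (i : ℕ) : ℝ :=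
  if i ∈ p.1 then 0 else if i ∈ p.2 then i + 1 else n + 1

lemma chainWeight_lt_of_mem_chainAt {n : ℕ} {p : Finset ℕ × Finset ℕ} (hU : p.2 ⊆ range n)
    {i j s : ℕ} (hi : i ∈ chainAt p.1 p.2 s) (hj : j ∉ chainAt p.1 p.2 s) :
    chainWeight n p i < chainWeight n p j := by
  simp only [chainAt, mem_union, mem_filter, not_or, not_and, not_lt] at hi hj
  obtain ⟨hjA, hjU⟩ := hj
  unfold chainWeight
  rw [if_neg hjA]
  by_cases hiA : i ∈ p.1
  · rw [if_pos hiA]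
    split_ifs <;> positivity
  · obtain ⟨hiU, his⟩ := hi.resolve_left hiA
    have hin := mem_range.mp (hU hiU)
    rw [if_neg hiA, if_pos hiU]
    split_ifs with hjU'
    · exact_mod_cast Nat.succ_lt_succ (his.trans_le (hjU hjU'))
    · exact_mod_cast Nat.succ_lt_succ hin

def Separates {α : Type*} (v : α → ℝ) (D : Finset α) : Prop := ∀ i ∈ D, ∀ j ∉ D, v i < v j

lemma Separates.subset_or_subset {α : Type*} {v : α → ℝ} {A B : Finset α} (hA : Separates v A)
    (hB : Separates v B) : A ⊆ B ∨ B ⊆ A := by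
  by_contra! h
  obtain ⟨i, hiA, hiB⟩ := not_subset.mp h.1
  obtain ⟨j, hjB, hjA⟩ := not_subset.mp h.2
  exact lt_asymm (hA i hiA j hjA) (hB j hjB i hiB)

lemma card_le_card_of_forall_separates {α : Type*} {𝒜 : Finset (Finset α)} {S : Finset (α → ℝ)}
    (h𝒜 : IsAntichain (· ⊆ ·) (𝒜 : Set (Finset α))) (hS : ∀ A ∈ 𝒜, ∃ v ∈ S, Separates v A) :
    #𝒜 ≤ #S :=
  card_le_card_of_forall_subsingleton (fun A v => Separates v A) hS
    fun _ _ _ ⟨hA, hvA⟩ _ ⟨hB, hvB⟩ =>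
      (hvA.subset_or_subset hvB).elim (h𝒜.eq hA hB) fun h => (h𝒜.eq hB hA h).symm

lemma exists_separating_finset (n : ℕ) [NeZero n] :
    ∃ S : Finset (Fin n → ℝ), ↑S ⊆ V0 n ∧ #S ≤ n.choose ((n + 1) / 2) ∧
      ∀ D : Finset (Fin n), ∃ v ∈ S, Separates v D := by
  obtain ⟨P, hP⟩ := exists_isSymmChainDecomp n
  let vec : Finset ℕ × Finset ℕ → Fin n → ℝ := fun p i =>
    chainWeight n p i - chainWeight n p (n - 1)
  refine ⟨P.image vec, ?_, card_image_le.trans hP.card_le_choose, fun D => ?_⟩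
  · intro v hv
    obtain ⟨p, -, rfl⟩ := mem_image.mp hv
    exact sub_apply_last_mem_V0 fun i => chainWeight n p i
  · obtain ⟨p, hp, s, hs⟩ := hP.exists_chainAt_eq (D.map Fin.valEmbedding) fun x hx => by
      obtain ⟨i, -, rfl⟩ := mem_map.mp hx
      exact mem_range.mpr i.isLt
    refine ⟨vec p, mem_image_of_mem _ hp, fun i hi j hj => sub_lt_sub_right
      (chainWeight_lt_of_mem_chainAt (hP.snd_subset_range hp) (s := s) ?_ ?_) _⟩
    · exact hs ▸ (mem_map' _).mpr hi
    · exact hs ▸ (mem_map' _).not.mpr hj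

lemma exists_illum_of_forall_separates {n : ℕ} [NeZero n] {S : Finset (Fin n → ℝ)}
    (hS : ∀ D, ∃ v ∈ S, Separates v D) {z : Fin n → ℝ} (hz : vnorm n z = 1) :
    ∃ v ∈ S, illum n (vnorm n) v z := by
  obtain ⟨v, hv, hsep⟩ := hS {i | ∃ j, z i - z j = 1}
  refine ⟨v, hv, (illum_vnorm_iff hz).mpr fun i j hij => hsep i (by simpa using ⟨j, hij⟩) j ?_⟩
  simp only [mem_filter, mem_univ, true_and, not_exists]
  intro k hjk
  linarith [sub_le_vnorm z i k]

lemma exists_separates_of_illum {n : ℕ} {S : Finset (Fin n → ℝ)}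
    (hS : ∀ z ∈ V0 n, vnorm n z = 1 → ∃ v ∈ S, illum n (vnorm n) v z) {A : Finset (Fin n)}
    (hA : A.Nonempty) (hA' : A ≠ univ) : ∃ v ∈ S, Separates v A := by
  obtain ⟨i₀, hi₀⟩ := hA
  obtain ⟨j₀, hj₀⟩ : ∃ j, j ∉ A := by simpa [eq_univ_iff_forall] using hA'
  have : NeZero n := ⟨by rintro rfl; exact i₀.elim0⟩
  let x : Fin n → ℝ := fun i => if i ∈ A then 1 else 0
  let z := fun i => x i - x ⟨n - 1, Nat.sub_one_lt (NeZero.ne n)⟩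
  have hz : ∀ i j, z i - z j = x i - x j := fun i j => sub_sub_sub_cancel_right _ _ _
  have hx : ∀ i j, x i - x j ≤ 1 := by
    intro i j
    simp only [x]
    split_ifs <;> norm_num
  have hx1 : ∀ i ∈ A, ∀ j ∉ A, z i - z j = 1 := by
    intro i hi j hj
    simp [hz, x, hi, hj]
  have hz1 : vnorm n z = 1 := vnorm_eq_of_sub_eq (fun i j => hz i j ▸ hx i j) (hx1 i₀ hi₀ j₀ hj₀)
  obtain ⟨v, hv, hill⟩ := hS z (sub_apply_last_mem_V0 x) hz1
  exact ⟨v, hv, fun i hi j hj => (illum_vnorm_iff hz1).mp hill i j (hx1 i hi j hj)⟩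

lemma choose_le_card_of_illum {n : ℕ} (hn : 2 ≤ n) {S : Finset (Fin n → ℝ)}
    (hS : ∀ z ∈ V0 n, vnorm n z = 1 → ∃ v ∈ S, illum n (vnorm n) v z) :
    n.choose ((n + 1) / 2) ≤ #S := by
  calc n.choose ((n + 1) / 2) = #(powersetCard ((n + 1) / 2) (univ : Finset (Fin n))) := by simp
    _ ≤ #S := card_le_card_of_forall_separates (Set.sized_powersetCard _ _).isAntichain
        fun A hA => by
      obtain ⟨-, hcard⟩ := mem_powersetCard.mp hA
      refine exists_separates_of_illum hS (card_pos.mp (by omega)) fun h => ?_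
      rw [h, card_univ, Fintype.card_fin] at hcard
      omega

/-- The illumination number of the unit ball of the variation norm on
`V0 = {x ∈ ℝⁿ : x_n = 0}` is exactly `C(n, ⌈n/2⌉)`. -/
theorem stmt2 (n : ℕ) (hn : 2 ≤ n) :
    IsLeast {k : ℕ | ∃ S : Finset (Fin n → ℝ), ↑S ⊆ V0 n ∧ S.card = k ∧
        ∀ z ∈ V0 n, vnorm n z = 1 → ∃ v ∈ S, illum n (vnorm n) v z}
      (Nat.choose n ((n + 1) / 2)) := by
  have : NeZero n := ⟨by omega⟩
  refine ⟨?_, fun k ⟨S, _, hk, hS⟩ => hk ▸ choose_le_card_of_illum hn hS⟩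
  obtain ⟨S, hSV, hcard, hsep⟩ := exists_separating_finset n
  have hS : ∀ z ∈ V0 n, vnorm n z = 1 → ∃ v ∈ S, illum n (vnorm n) v z :=
    fun _ _ hz => exists_illum_of_forall_separates hsep hz
  exact ⟨S, hSV, le_antisymm hcard (choose_le_card_of_illum hn hS), hS⟩
end

section
/- Let n ≥ 2. The set of extreme points of the closed unit ball B_v of the variation norm on V_0 := {x ∈ ℝⁿ : x_n = 0} is exactly {v^I_+ : ∅ ≠ I ⊆ {1,…,n−1}} ∪ {v^I_− : ∅ ≠ I ⊆ {1,…,n−1}}, where (v^I_+)_i = 1 if i ∈ I and 0 otherwise, and (v^I_−)_i = −1 if i ∈ I and 0 otherwise. In particular B_v has exactly 2ⁿ − 2 extreme points. -/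
section Aux
variable {n : ℕ}

lemma vn_le_csup [Nonempty (Fin n)] (x : Fin n → ℝ) (i : Fin n) : x i ≤ ⨆ j, x j :=
  le_ciSup (Set.Finite.bddAbove (Set.finite_range x)) i

lemma vn_cinf_le [Nonempty (Fin n)] (x : Fin n → ℝ) (i : Fin n) : (⨅ j, x j) ≤ x i :=
  ciInf_le (Set.Finite.bddBelow (Set.finite_range x)) i

lemma vn_exists_sup [Nonempty (Fin n)] (x : Fin n → ℝ) : ∃ i, x i = ⨆ j, x j := by
  obtain ⟨i, hi⟩ := Finite.exists_max x
  exact ⟨i, le_antisymm (vn_le_csup x i) (ciSup_le hi)⟩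

lemma vn_exists_inf [Nonempty (Fin n)] (x : Fin n → ℝ) : ∃ i, x i = ⨅ j, x j := by
  obtain ⟨i, hi⟩ := Finite.exists_min x
  exact ⟨i, le_antisymm (le_ciInf hi) (vn_cinf_le x i)⟩

lemma mem_B_of_bounds [Nonempty (Fin n)] {y : Fin n → ℝ} {a b : ℝ}
    (h1 : ∀ j, y j ≤ a) (h2 : ∀ j, b ≤ y j) (hab : a - b ≤ 1) (hV : y ∈ V0 n) :
    y ∈ {x ∈ V0 n | vnorm n x ≤ 1} := by
  refine ⟨hV, ?_⟩
  have hA : (⨆ j, y j) ≤ a := ciSup_le h1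
  have hB : b ≤ ⨅ j, y j := le_ciInf h2
  unfold vnorm; linarith

lemma mid_openSegment (x w : Fin n → ℝ) (t : ℝ) :
    x ∈ openSegment ℝ (x + t • w) (x + (-t) • w) := by
  refine ⟨1/2, 1/2, by norm_num, by norm_num, by norm_num, ?_⟩
  funext j
  simp only [Pi.add_apply, Pi.smul_apply, smul_eq_mul]
  ring

lemma memB_bounds (hn : 2 ≤ n) {y : Fin n → ℝ} (hy : y ∈ V0 n) (hv : vnorm n y ≤ 1) :
    (∀ i, -1 ≤ y i ∧ y i ≤ 1) ∧
    ((∃ j, y j = 1) → ∀ i, 0 ≤ y i) ∧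
    ((∃ j, y j = -1) → ∀ i, y i ≤ 0) := by
  haveI : Nonempty (Fin n) := ⟨⟨0, by omega⟩⟩
  set M := ⨆ i, y i with hM
  set m := ⨅ i, y i with hm
  have hlast : y ⟨n-1, by omega⟩ = 0 := hy _ rfl
  have h0M : 0 ≤ M := hlast ▸ vn_le_csup y ⟨n-1, by omega⟩
  have hm0 : m ≤ 0 := hlast ▸ vn_cinf_le y ⟨n-1, by omega⟩
  have hMm : M - m ≤ 1 := hv
  have hub : ∀ i, y i ≤ M := vn_le_csup y
  have hlb : ∀ i, m ≤ y i := vn_cinf_le y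
  refine ⟨fun i => ⟨by linarith [hub i, hlb i], by linarith [hub i, hlb i]⟩, ?_, ?_⟩
  · rintro ⟨j, hj⟩ i
    have : 1 ≤ M := hj ▸ hub j
    linarith [hlb i]
  · rintro ⟨j, hj⟩ i
    have : m ≤ -1 := hj ▸ hlb j
    linarith [hub i]

end Aux

/-- The extreme points of the unit ball of the variation norm on `V0` are
exactly the vectors `v^I_+` and `v^I_-` for nonempty `I ⊆ {1,…,n-1}`; in particular
there are exactly `2^n - 2` of them. -/
theorem stmt3 (n : ℕ) (hn : 2 ≤ n) :
    Set.extremePoints ℝ {x ∈ V0 n | vnorm n x ≤ 1} =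
      {x : Fin n → ℝ | ∃ I : Finset (Fin n), I.Nonempty ∧ (∀ i ∈ I, (i : ℕ) < n - 1) ∧
        ((∀ i, x i = if i ∈ I then 1 else 0) ∨ (∀ i, x i = if i ∈ I then -1 else 0))} ∧
    (Set.extremePoints ℝ {x ∈ V0 n | vnorm n x ≤ 1}).ncard = 2 ^ n - 2 := by
  classical
  haveI : Nonempty (Fin n) := ⟨⟨0, by omega⟩⟩
  have hchar : Set.extremePoints ℝ {x ∈ V0 n | vnorm n x ≤ 1} =
      {x : Fin n → ℝ | ∃ I : Finset (Fin n), I.Nonempty ∧ (∀ i ∈ I, (i : ℕ) < n - 1) ∧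
        ((∀ i, x i = if i ∈ I then 1 else 0) ∨ (∀ i, x i = if i ∈ I then -1 else 0))} := by
    ext x
    rw [mem_extremePoints]
    constructor
    · -- extreme point → special form
      rintro ⟨⟨hxV, hxn⟩, hext⟩
      set M := ⨆ i, x i with hM
      set m := ⨅ i, x i with hm
      have hlast : x ⟨n-1, by omega⟩ = 0 := hxV _ rfl
      have h0M : 0 ≤ M := hlast ▸ vn_le_csup x ⟨n-1, by omega⟩
      have hm0 : m ≤ 0 := hlast ▸ vn_cinf_le x ⟨n-1, by omega⟩
      have hub : ∀ i, x i ≤ M := vn_le_csup x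
      have hlb : ∀ i, m ≤ x i := vn_cinf_le x
      have hxn' : M - m ≤ 1 := hxn
      -- Step A: the norm equals 1
      have hMm1 : M - m = 1 := by
        by_contra hne
        have hlt1 : M - m < 1 := lt_of_le_of_ne hxn' hne
        set t := (1 - (M - m))/2 with ht
        have ht0 : 0 < t := by rw [ht]; linarith
        set u : Fin n → ℝ := fun j => if j = (⟨0, by omega⟩ : Fin n) then 1 else 0 with hu
        have hu01 : ∀ j, 0 ≤ u j ∧ u j ≤ 1 := by
          intro j; by_cases h : j = (⟨0, by omega⟩ : Fin n) <;> simp [hu, h]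
        have huV : ∀ j : Fin n, (j:ℕ) = n - 1 → u j = 0 := by
          intro j hj
          have hne' : j ≠ (⟨0, by omega⟩ : Fin n) := by
            intro h; rw [h] at hj; simp at hj; omega
          simp [hu, hne']
        have hyB : (x + t • u) ∈ {x ∈ V0 n | vnorm n x ≤ 1} := by
          refine mem_B_of_bounds (a := M + t) (b := m) ?_ ?_ (by linarith) ?_
          · intro j
            have := (hu01 j).2
            have h2 : t * u j ≤ t := by nlinarith
            simp only [Pi.add_apply, Pi.smul_apply, smul_eq_mul]
            linarith [hub j]
          · intro j
            have := (hu01 j).1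
            have h2 : 0 ≤ t * u j := by positivity
            simp only [Pi.add_apply, Pi.smul_apply, smul_eq_mul]
            linarith [hlb j]
          · intro j hj
            simp only [Pi.add_apply, Pi.smul_apply, smul_eq_mul, huV j hj, hxV j hj]
            ring
        have hzB : (x + (-t) • u) ∈ {x ∈ V0 n | vnorm n x ≤ 1} := by
          refine mem_B_of_bounds (a := M) (b := m - t) ?_ ?_ (by linarith) ?_
          · intro j
            have := (hu01 j).1
            have h2 : 0 ≤ t * u j := by positivity
            simp only [Pi.add_apply, Pi.smul_apply, smul_eq_mul]
            nlinarith [hub j]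
          · intro j
            have := (hu01 j).2
            have h2 : t * u j ≤ t := by nlinarith
            simp only [Pi.add_apply, Pi.smul_apply, smul_eq_mul]
            nlinarith [hlb j]
          · intro j hj
            simp only [Pi.add_apply, Pi.smul_apply, smul_eq_mul, huV j hj, hxV j hj]
            ring
        have hkey := hext _ hyB _ hzB (mid_openSegment x u t)
        have := congrFun hkey.1 (⟨0, by omega⟩ : Fin n)
        simp only [Pi.add_apply, Pi.smul_apply, smul_eq_mul, hu, eq_self_iff_true, if_true] at this
        nlinarith
      -- Step B: every non-last coordinate is m or M
      have hcoord : ∀ i : Fin n, (i:ℕ) ≠ n - 1 → x i = M ∨ x i = m := by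
        intro i hi
        by_contra hcon
        push_neg at hcon
        have h1 : x i < M := lt_of_le_of_ne (hub i) hcon.1
        have h2 : m < x i := lt_of_le_of_ne (hlb i) (Ne.symm hcon.2)
        set t := min (M - x i) (x i - m) with ht
        have ht0 : 0 < t := lt_min (by linarith) (by linarith)
        have ht1 : t ≤ M - x i := min_le_left _ _
        have ht2 : t ≤ x i - m := min_le_right _ _
        set u : Fin n → ℝ := fun j => if j = i then 1 else 0 with hu
        have huV : ∀ j : Fin n, (j:ℕ) = n - 1 → u j = 0 := by
          intro j hj
          have : j ≠ i := by intro h; rw [h] at hj; exact hi hj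
          simp [hu, this]
        have hyB : (x + t • u) ∈ {x ∈ V0 n | vnorm n x ≤ 1} := by
          refine mem_B_of_bounds (a := M) (b := m) ?_ ?_ (by linarith) ?_
          · intro j
            simp only [Pi.add_apply, Pi.smul_apply, smul_eq_mul, hu]
            by_cases h : j = i
            · subst h; simp only [eq_self_iff_true, if_true]; linarith
            · simp only [if_neg h]; linarith [hub j]
          · intro j
            simp only [Pi.add_apply, Pi.smul_apply, smul_eq_mul, hu]
            by_cases h : j = i
            · subst h; simp only [eq_self_iff_true, if_true]; linarith
            · simp only [if_neg h]; linarith [hlb j]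
          · intro j hj
            simp only [Pi.add_apply, Pi.smul_apply, smul_eq_mul, huV j hj, hxV j hj]
            ring
        have hzB : (x + (-t) • u) ∈ {x ∈ V0 n | vnorm n x ≤ 1} := by
          refine mem_B_of_bounds (a := M) (b := m) ?_ ?_ (by linarith) ?_
          · intro j
            simp only [Pi.add_apply, Pi.smul_apply, smul_eq_mul, hu]
            by_cases h : j = i
            · subst h; simp only [eq_self_iff_true, if_true]; linarith
            · simp only [if_neg h]; linarith [hub j]
          · intro j
            simp only [Pi.add_apply, Pi.smul_apply, smul_eq_mul, hu]
            by_cases h : j = i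
            · subst h; simp only [eq_self_iff_true, if_true]; linarith
            · simp only [if_neg h]; linarith [hlb j]
          · intro j hj
            simp only [Pi.add_apply, Pi.smul_apply, smul_eq_mul, huV j hj, hxV j hj]
            ring
        have hkey := hext _ hyB _ hzB (mid_openSegment x u t)
        have := congrFun hkey.1 i
        simp only [Pi.add_apply, Pi.smul_apply, smul_eq_mul, hu, eq_self_iff_true, if_true] at this
        nlinarith
      -- Step C: m = 0 or M = 0
      have hzero : m = 0 ∨ M = 0 := by
        by_contra hcon
        push_neg at hcon
        have hm' : m < 0 := lt_of_le_of_ne hm0 hcon.1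
        have hM' : 0 < M := lt_of_le_of_ne h0M (Ne.symm hcon.2)
        set t := min M (-m) / 2 with ht
        have htle1 : t ≤ M / 2 := by rw [ht]; have := min_le_left M (-m); linarith
        have htle2 : t ≤ (-m) / 2 := by rw [ht]; have := min_le_right M (-m); linarith
        have ht0 : 0 < t := by
          rw [ht]; have := lt_min hM' (by linarith : (0:ℝ) < -m); linarith
        set u : Fin n → ℝ := fun j => if x j = 0 then 0 else 1 with hu
        have huV : ∀ j : Fin n, (j:ℕ) = n - 1 → u j = 0 := by
          intro j hj; simp [hu, hxV j hj]
        have hyB : (x + t • u) ∈ {x ∈ V0 n | vnorm n x ≤ 1} := by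
          refine mem_B_of_bounds (a := M + t) (b := m + t) ?_ ?_ (by linarith) ?_
          · intro j
            simp only [Pi.add_apply, Pi.smul_apply, smul_eq_mul, hu]
            by_cases h : x j = 0
            · simp only [h, eq_self_iff_true, if_true]; linarith
            · simp only [if_neg h]; linarith [hub j]
          · intro j
            simp only [Pi.add_apply, Pi.smul_apply, smul_eq_mul, hu]
            by_cases h : x j = 0
            · simp only [h, eq_self_iff_true, if_true]; linarith
            · simp only [if_neg h]; linarith [hlb j]
          · intro j hj
            simp only [Pi.add_apply, Pi.smul_apply, smul_eq_mul, huV j hj, hxV j hj]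
            ring
        have hzB : (x + (-t) • u) ∈ {x ∈ V0 n | vnorm n x ≤ 1} := by
          refine mem_B_of_bounds (a := M - t) (b := m - t) ?_ ?_ (by linarith) ?_
          · intro j
            simp only [Pi.add_apply, Pi.smul_apply, smul_eq_mul, hu]
            by_cases h : x j = 0
            · simp only [h, eq_self_iff_true, if_true]; linarith
            · simp only [if_neg h]; linarith [hub j]
          · intro j
            simp only [Pi.add_apply, Pi.smul_apply, smul_eq_mul, hu]
            by_cases h : x j = 0
            · simp only [h, eq_self_iff_true, if_true]; linarith
            · simp only [if_neg h]; linarith [hlb j]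
          · intro j hj
            simp only [Pi.add_apply, Pi.smul_apply, smul_eq_mul, huV j hj, hxV j hj]
            ring
        have hkey := hext _ hyB _ hzB (mid_openSegment x u t)
        obtain ⟨j0, hj0⟩ := vn_exists_sup x
        have hj0' : x j0 ≠ 0 := by rw [hj0, ← hM]; linarith
        have := congrFun hkey.1 j0
        simp only [Pi.add_apply, Pi.smul_apply, smul_eq_mul, hu, if_neg hj0'] at this
        nlinarith
      obtain ⟨j0, hj0⟩ := vn_exists_sup x
      obtain ⟨j1, hj1⟩ := vn_exists_inf x
      rcases hzero with hz | hz
      · -- m = 0, M = 1 : positive indicator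
        have hM1 : M = 1 := by rw [hz] at hMm1; linarith
        refine ⟨Finset.univ.filter (fun i => x i = 1), ⟨j0, ?_⟩, ?_, Or.inl ?_⟩
        · simp [Finset.mem_filter, hj0, ← hM, hM1]
        · intro i hi
          simp only [Finset.mem_filter, Finset.mem_univ, true_and] at hi
          have hine : (i:ℕ) ≠ n - 1 := by
            intro h; rw [hxV i h] at hi; norm_num at hi
          have := i.isLt; omega
        · intro i
          by_cases hxi : x i = 1
          · simp [Finset.mem_filter, hxi]
          · simp only [Finset.mem_filter, Finset.mem_univ, true_and, if_neg (by exact hxi)]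
            by_cases hi : (i:ℕ) = n - 1
            · exact hxV i hi
            · rcases hcoord i hi with h | h
              · exact absurd (h.trans hM1) hxi
              · rw [h, hz]
      · -- M = 0, m = -1 : negative indicator
        have hm1 : m = -1 := by rw [hz] at hMm1; linarith
        refine ⟨Finset.univ.filter (fun i => x i = -1), ⟨j1, ?_⟩, ?_, Or.inr ?_⟩
        · simp [Finset.mem_filter, hj1, ← hm, hm1]
        · intro i hi
          simp only [Finset.mem_filter, Finset.mem_univ, true_and] at hi
          have hine : (i:ℕ) ≠ n - 1 := by
            intro h; rw [hxV i h] at hi; norm_num at hi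
          have := i.isLt; omega
        · intro i
          by_cases hxi : x i = -1
          · simp [Finset.mem_filter, hxi]
          · simp only [Finset.mem_filter, Finset.mem_univ, true_and, if_neg (by exact hxi)]
            by_cases hi : (i:ℕ) = n - 1
            · exact hxV i hi
            · rcases hcoord i hi with h | h
              · rw [h, hz]
              · exact absurd (h.trans hm1) hxi
    · -- special form → extreme point
      rintro ⟨I, hIne, hIlt, hcase⟩
      obtain ⟨i0, hi0⟩ := hIne
      have hInl : ∀ i : Fin n, (i:ℕ) = n - 1 → i ∉ I := by
        intro i hi hmem
        have := hIlt i hmem; omega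
      rcases hcase with hx | hx
      · have hxB : x ∈ {x ∈ V0 n | vnorm n x ≤ 1} := by
          refine mem_B_of_bounds (a := 1) (b := 0) ?_ ?_ (by norm_num) ?_
          · intro j; rw [hx j]; split <;> norm_num
          · intro j; rw [hx j]; split <;> norm_num
          · intro j hj; rw [hx j, if_neg (hInl j hj)]
        refine ⟨hxB, ?_⟩
        rintro y ⟨hyV, hyn⟩ z ⟨hzV, hzn⟩ ⟨a, b, ha, hb, hab, hsum⟩
        obtain ⟨hyb, hyp, -⟩ := memB_bounds hn hyV hyn
        obtain ⟨hzb, hzp, -⟩ := memB_bounds hn hzV hzn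
        have hpt : ∀ i, a * y i + b * z i = x i := by
          intro i
          have := congrFun hsum i
          simpa using this
        have hyI : ∀ i ∈ I, y i = 1 := by
          intro i hi
          have h1 : a * y i + b * z i = 1 := by rw [hpt i, hx i, if_pos hi]
          by_contra hne
          have hlt : y i < 1 := lt_of_le_of_ne (hyb i).2 hne
          nlinarith [(hzb i).2]
        have hzI : ∀ i ∈ I, z i = 1 := by
          intro i hi
          have h1 : a * y i + b * z i = 1 := by rw [hpt i, hx i, if_pos hi]
          by_contra hne
          have hlt : z i < 1 := lt_of_le_of_ne (hzb i).2 hne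
          nlinarith [(hyb i).2]
        have hy0 : ∀ i, 0 ≤ y i := hyp ⟨i0, hyI i0 hi0⟩
        have hz0 : ∀ i, 0 ≤ z i := hzp ⟨i0, hzI i0 hi0⟩
        constructor
        · funext i
          rw [hx i]
          by_cases hi : i ∈ I
          · rw [if_pos hi]; exact hyI i hi
          · rw [if_neg hi]
            have h0 : a * y i + b * z i = 0 := by rw [hpt i, hx i, if_neg hi]
            nlinarith [hy0 i, hz0 i]
        · funext i
          rw [hx i]
          by_cases hi : i ∈ I
          · rw [if_pos hi]; exact hzI i hi
          · rw [if_neg hi]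
            have h0 : a * y i + b * z i = 0 := by rw [hpt i, hx i, if_neg hi]
            nlinarith [hy0 i, hz0 i]
      · have hxB : x ∈ {x ∈ V0 n | vnorm n x ≤ 1} := by
          refine mem_B_of_bounds (a := 0) (b := -1) ?_ ?_ (by norm_num) ?_
          · intro j; rw [hx j]; split <;> norm_num
          · intro j; rw [hx j]; split <;> norm_num
          · intro j hj; rw [hx j, if_neg (hInl j hj)]
        refine ⟨hxB, ?_⟩
        rintro y ⟨hyV, hyn⟩ z ⟨hzV, hzn⟩ ⟨a, b, ha, hb, hab, hsum⟩
        obtain ⟨hyb, -, hyp⟩ := memB_bounds hn hyV hyn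
        obtain ⟨hzb, -, hzp⟩ := memB_bounds hn hzV hzn
        have hpt : ∀ i, a * y i + b * z i = x i := by
          intro i
          have := congrFun hsum i
          simpa using this
        have hyI : ∀ i ∈ I, y i = -1 := by
          intro i hi
          have h1 : a * y i + b * z i = -1 := by rw [hpt i, hx i, if_pos hi]
          by_contra hne
          have hlt : -1 < y i := lt_of_le_of_ne (hyb i).1 (Ne.symm hne)
          nlinarith [(hzb i).1]
        have hzI : ∀ i ∈ I, z i = -1 := by
          intro i hi
          have h1 : a * y i + b * z i = -1 := by rw [hpt i, hx i, if_pos hi]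
          by_contra hne
          have hlt : -1 < z i := lt_of_le_of_ne (hzb i).1 (Ne.symm hne)
          nlinarith [(hyb i).1]
        have hy0 : ∀ i, y i ≤ 0 := hyp ⟨i0, hyI i0 hi0⟩
        have hz0 : ∀ i, z i ≤ 0 := hzp ⟨i0, hzI i0 hi0⟩
        constructor
        · funext i
          rw [hx i]
          by_cases hi : i ∈ I
          · rw [if_pos hi]; exact hyI i hi
          · rw [if_neg hi]
            have h0 : a * y i + b * z i = 0 := by rw [hpt i, hx i, if_neg hi]
            nlinarith [hy0 i, hz0 i]
        · funext i
          rw [hx i]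
          by_cases hi : i ∈ I
          · rw [if_pos hi]; exact hzI i hi
          · rw [if_neg hi]
            have h0 : a * y i + b * z i = 0 := by rw [hpt i, hx i, if_neg hi]
            nlinarith [hy0 i, hz0 i]
  refine ⟨hchar, ?_⟩
  rw [hchar]
  set lastF : Fin n := ⟨n-1, by omega⟩ with hlastF
  set J : Finset (Fin n) := Finset.univ.erase lastF with hJ
  have hJcard : J.card = n - 1 := by
    rw [hJ, Finset.card_erase_of_mem (Finset.mem_univ _), Finset.card_univ, Fintype.card_fin]
  have hmemJ : ∀ i : Fin n, i ∈ J ↔ (i:ℕ) < n - 1 := by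
    intro i
    rw [hJ, Finset.mem_erase]
    simp only [Finset.mem_univ, and_true]
    constructor
    · intro h
      have h2 : (i:ℕ) ≠ n - 1 := fun he => h (Fin.ext he)
      have := i.isLt; omega
    · intro h he
      rw [he] at h
      have : (lastF : ℕ) = n - 1 := rfl
      omega
  set P : Set (Finset (Fin n)) := {I | I.Nonempty ∧ ∀ i ∈ I, (i:ℕ) < n - 1} with hP
  set fpos : Finset (Fin n) → (Fin n → ℝ) := fun I => fun i => if i ∈ I then 1 else 0 with hfpos
  set fneg : Finset (Fin n) → (Fin n → ℝ) := fun I => fun i => if i ∈ I then -1 else 0 with hfneg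
  have hSeq : {x : Fin n → ℝ | ∃ I : Finset (Fin n), I.Nonempty ∧ (∀ i ∈ I, (i : ℕ) < n - 1) ∧
        ((∀ i, x i = if i ∈ I then 1 else 0) ∨ (∀ i, x i = if i ∈ I then -1 else 0))}
      = fpos '' P ∪ fneg '' P := by
    ext x
    simp only [Set.mem_setOf_eq, Set.mem_union, Set.mem_image, hP]
    constructor
    · rintro ⟨I, h1, h2, h3 | h3⟩
      · exact Or.inl ⟨I, ⟨h1, h2⟩, (funext fun i => (h3 i).symm)⟩
      · exact Or.inr ⟨I, ⟨h1, h2⟩, (funext fun i => (h3 i).symm)⟩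
    · rintro (⟨I, ⟨h1, h2⟩, rfl⟩ | ⟨I, ⟨h1, h2⟩, rfl⟩)
      · exact ⟨I, h1, h2, Or.inl fun i => rfl⟩
      · exact ⟨I, h1, h2, Or.inr fun i => rfl⟩
  have hPfin : P.Finite := Set.toFinite _
  have hinjpos : Set.InjOn fpos P := by
    intro I hI I' hI' h
    ext i
    have := congrFun h i
    simp only [hfpos] at this
    by_cases h1 : i ∈ I <;> by_cases h2 : i ∈ I' <;>
      simp [h1, h2] at this ⊢
  have hinjneg : Set.InjOn fneg P := by
    intro I hI I' hI' h
    ext i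
    have := congrFun h i
    simp only [hfneg] at this
    by_cases h1 : i ∈ I <;> by_cases h2 : i ∈ I' <;>
      simp [h1, h2] at this ⊢
  have hdisj : Disjoint (fpos '' P) (fneg '' P) := by
    rw [Set.disjoint_left]
    rintro x ⟨I, hI, rfl⟩ ⟨I', hI', hx⟩
    obtain ⟨i, hi⟩ := hI.1
    have := congrFun hx i
    simp only [hfpos, hfneg, if_pos hi] at this
    by_cases h2 : i ∈ I' <;> simp [h2] at this <;> norm_num at this
  have hPcard : P.ncard = 2 ^ (n-1) - 1 := by
    have hPc : P = ↑(J.powerset.erase ∅) := by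
      ext I
      rw [Finset.mem_coe, Finset.mem_erase, Finset.mem_powerset]
      simp only [hP, Set.mem_setOf_eq]
      rw [Finset.nonempty_iff_ne_empty]
      constructor
      · rintro ⟨h1, h2⟩
        exact ⟨h1, fun i hi => (hmemJ i).mpr (h2 i hi)⟩
      · rintro ⟨h1, h2⟩
        exact ⟨h1, fun i hi => (hmemJ i).mp (h2 hi)⟩
    rw [hPc, Set.ncard_coe_finset,
      Finset.card_erase_of_mem (Finset.empty_mem_powerset J), Finset.card_powerset, hJcard]
  rw [hSeq, Set.ncard_union_eq hdisj (hPfin.image _) (hPfin.image _),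
    Set.ncard_image_of_injOn hinjpos, Set.ncard_image_of_injOn hinjneg, hPcard]
  have h2 : 2 * 2 ^ (n-1) = 2 ^ n := by
    rw [← pow_succ']
    congr 1
    omega
  have h3 : 1 ≤ 2 ^ (n-1) := Nat.one_le_two_pow
  omega
end

section
/- Let n ≥ 2. The set of extreme points of the closed unit ball B_H of the norm ‖x‖_H := max(max_i x_i, 0) − min(min_i x_i, 0) on ℝ^{n−1} is exactly ({0,1}^{n−1} ∪ {0,−1}^{n−1}) \ {(0,…,0)}. -/
lemma hnorm_le_one_iff {m : ℕ} (hm : 0 < m) (x : Fin m → ℝ) :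
    Hnorm m x ≤ 1 ↔ (∀ i, -1 ≤ x i ∧ x i ≤ 1) ∧ ∀ i j, x i - x j ≤ 1 := by
  haveI : Nonempty (Fin m) := ⟨⟨0, hm⟩⟩
  have hba : BddAbove (Set.range x) := (Set.finite_range x).bddAbove
  have hbb : BddBelow (Set.range x) := (Set.finite_range x).bddBelow
  have hsup : ∀ i, x i ≤ ⨆ j, x j := fun i => le_ciSup hba i
  have hinf : ∀ i, (⨅ j, x j) ≤ x i := fun i => ciInf_le hbb i
  obtain ⟨i0, hi0⟩ := exists_eq_ciSup_of_finite (f := x)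
  obtain ⟨j0, hj0⟩ := exists_eq_ciInf_of_finite (f := x)
  have hA1 : (⨆ j, x j) ≤ max (⨆ j, x j) 0 := le_max_left _ _
  have hA2 : (0:ℝ) ≤ max (⨆ j, x j) 0 := le_max_right _ _
  have hB1 : min (⨅ j, x j) 0 ≤ ⨅ j, x j := min_le_left _ _
  have hB2 : min (⨅ j, x j) 0 ≤ 0 := min_le_right _ _
  unfold Hnorm
  constructor
  · intro h
    refine ⟨fun i => ⟨?_, ?_⟩, fun i j => ?_⟩
    · have h1 := hinf i
      rcases min_cases (⨅ j, x j) 0 with ⟨he, _⟩ | ⟨he, _⟩ <;> linarith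
    · have h1 := hsup i
      rcases max_cases (⨆ j, x j) 0 with ⟨he, _⟩ | ⟨he, _⟩ <;> linarith
    · have h1 := hsup i; have h2 := hinf j; linarith
  · rintro ⟨h1, h2⟩
    have e1 : (⨆ j, x j) ≤ 1 := by rw [← hi0]; exact (h1 i0).2
    have e2 : (-1:ℝ) ≤ ⨅ j, x j := by rw [← hj0]; exact (h1 j0).1
    have e3 : (⨆ j, x j) - (⨅ j, x j) ≤ 1 := by rw [← hi0, ← hj0]; exact h2 i0 j0
    rcases max_cases (⨆ j, x j) 0 with ⟨he, _⟩ | ⟨he, _⟩ <;>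
      rcases min_cases (⨅ j, x j) 0 with ⟨hf, _⟩ | ⟨hf, _⟩ <;> rw [he, hf] <;> linarith

lemma mem_hull01 {m : ℕ} (u : Fin m → ℝ) (hu : ∀ i, 0 ≤ u i ∧ u i ≤ 1) :
    u ∈ convexHull ℝ {x : Fin m → ℝ | ∀ i, x i = 0 ∨ x i = 1} := by
  have hset : {x : Fin m → ℝ | ∀ i, x i = 0 ∨ x i = 1}
      = Set.univ.pi (fun _ : Fin m => ({0, 1} : Set ℝ)) := by
    ext x; simp [Set.mem_pi]
  rw [hset]
  apply mem_convexHull_pi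
  intro i _
  rw [convexHull_pair, segment_eq_Icc (by norm_num : (0:ℝ) ≤ 1)]
  exact ⟨(hu i).1, (hu i).2⟩

lemma mem_hull0neg1 {m : ℕ} (u : Fin m → ℝ) (hu : ∀ i, -1 ≤ u i ∧ u i ≤ 0) :
    u ∈ convexHull ℝ {x : Fin m → ℝ | ∀ i, x i = 0 ∨ x i = -1} := by
  have hset : {x : Fin m → ℝ | ∀ i, x i = 0 ∨ x i = -1}
      = Set.univ.pi (fun _ : Fin m => ({-1, 0} : Set ℝ)) := by
    ext x; constructor
    · intro h i _; rcases h i with h' | h' <;> simp [h']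
    · intro h i; rcases h i (Set.mem_univ i) with h' | h' <;> simp_all
  rw [hset]
  apply mem_convexHull_pi
  intro i _
  rw [convexHull_pair, segment_eq_Icc (by norm_num : (-1:ℝ) ≤ 0)]
  exact ⟨(hu i).1, (hu i).2⟩

lemma S_subset_ball {m : ℕ} (hm : 0 < m) :
    ({x : Fin m → ℝ | ∀ i, x i = 0 ∨ x i = 1} ∪ {x | ∀ i, x i = 0 ∨ x i = -1})
      ⊆ {x : Fin m → ℝ | Hnorm m x ≤ 1} := by
  intro z hz
  rw [Set.mem_setOf_eq, hnorm_le_one_iff hm]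
  rcases hz with h | h
  · refine ⟨fun i => ?_, fun i j => ?_⟩
    · rcases h i with hi | hi <;> rw [hi] <;> norm_num
    · rcases h i with hi | hi <;> rcases h j with hj | hj <;> rw [hi, hj] <;> norm_num
  · refine ⟨fun i => ?_, fun i j => ?_⟩
    · rcases h i with hi | hi <;> rw [hi] <;> norm_num
    · rcases h i with hi | hi <;> rcases h j with hj | hj <;> rw [hi, hj] <;> norm_num

lemma ball_convex {m : ℕ} (hm : 0 < m) : Convex ℝ {x : Fin m → ℝ | Hnorm m x ≤ 1} := by
  intro x hx y hy a b ha hb hab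
  rw [Set.mem_setOf_eq, hnorm_le_one_iff hm] at hx hy ⊢
  refine ⟨fun i => ?_, fun i j => ?_⟩
  · have h1 := mul_le_mul_of_nonneg_left (hx.1 i).1 ha
    have h2 := mul_le_mul_of_nonneg_left (hx.1 i).2 ha
    have h3 := mul_le_mul_of_nonneg_left (hy.1 i).1 hb
    have h4 := mul_le_mul_of_nonneg_left (hy.1 i).2 hb
    simp only [Pi.add_apply, Pi.smul_apply, smul_eq_mul]
    constructor <;> nlinarith
  · have h1 := mul_le_mul_of_nonneg_left (hx.2 i j) ha
    have h2 := mul_le_mul_of_nonneg_left (hy.2 i j) hb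
    simp only [Pi.add_apply, Pi.smul_apply, smul_eq_mul]
    nlinarith

lemma ball_eq_hull {m : ℕ} (hm : 0 < m) :
    {x : Fin m → ℝ | Hnorm m x ≤ 1} =
      convexHull ℝ ({x : Fin m → ℝ | ∀ i, x i = 0 ∨ x i = 1}
        ∪ {x | ∀ i, x i = 0 ∨ x i = -1}) := by
  haveI : Nonempty (Fin m) := ⟨⟨0, hm⟩⟩
  apply Set.Subset.antisymm
  · intro x hx
    rw [Set.mem_setOf_eq, hnorm_le_one_iff hm] at hx
    obtain ⟨h1, h2⟩ := hx
    obtain ⟨i1, hi1⟩ := Finite.exists_max (fun i => max (x i) 0)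
    obtain ⟨i2, hi2⟩ := Finite.exists_max (fun i => max (-x i) 0)
    set c : ℝ := max (x i1) 0 with hc
    set d : ℝ := max (-x i2) 0 with hd
    have hc0 : 0 ≤ c := le_max_right _ _
    have hd0 : 0 ≤ d := le_max_right _ _
    have hcd : c + d ≤ 1 := by
      rcases max_cases (x i1) 0 with ⟨he, _⟩ | ⟨he, _⟩ <;>
        rcases max_cases (-x i2) 0 with ⟨hf, _⟩ | ⟨hf, _⟩ <;> rw [hc, hd, he, hf]
      · linarith [h2 i1 i2]
      · linarith [(h1 i1).2]
      · linarith [(h1 i2).1]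
      · norm_num
    set α : ℝ := 1 - d with hα
    have hα0 : 0 ≤ α := by linarith
    have hcα : c ≤ α := by linarith
    set u : Fin m → ℝ := fun i => if α = 0 then 0 else max (x i) 0 / α with hu
    set w : Fin m → ℝ := fun i => if d = 0 then 0 else -(max (-x i) 0 / d) with hw
    have hu01 : ∀ i, 0 ≤ u i ∧ u i ≤ 1 := by
      intro i
      rw [hu]
      by_cases h : α = 0
      · simp [h]
      · have hαpos : 0 < α := lt_of_le_of_ne hα0 (Ne.symm h)
        simp only [if_neg h]
        constructor
        · positivity
        · rw [div_le_one hαpos]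
          exact le_trans (hi1 i) hcα
    have hw01 : ∀ i, -1 ≤ w i ∧ w i ≤ 0 := by
      intro i
      rw [hw]
      by_cases h : d = 0
      · simp [h]
      · have hdpos : 0 < d := lt_of_le_of_ne hd0 (Ne.symm h)
        simp only [if_neg h]
        constructor
        · rw [neg_le, neg_neg, div_le_one hdpos]
          exact hi2 i
        · have : (0:ℝ) ≤ max (-x i) 0 / d := by positivity
          linarith
    have heq : x = α • u + d • w := by
      funext i
      simp only [Pi.add_apply, Pi.smul_apply, smul_eq_mul, hu, hw]
      have hpq : max (x i) 0 - max (-x i) 0 = x i := by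
        rcases le_total (x i) 0 with h | h
        · rw [max_eq_right h, max_eq_left (by linarith)]; ring
        · rw [max_eq_left h, max_eq_right (by linarith)]; ring
      by_cases hα' : α = 0 <;> by_cases hd' : d = 0
      · exfalso; rw [hα] at hα'; rw [hd'] at hα'; norm_num at hα'
      · have hp0 : max (x i) 0 = 0 := le_antisymm (by linarith [hi1 i]) (le_max_right _ _)
        rw [if_pos hα', if_neg hd', mul_zero, zero_add, mul_neg, mul_comm d,
          div_mul_cancel₀ _ hd']
        linarith
      · have hq0 : max (-x i) 0 = 0 := by
          have := hi2 i
          rw [hd'] at this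
          exact le_antisymm this (le_max_right _ _)
        rw [if_neg hα', if_pos hd', mul_zero, add_zero, mul_comm α,
          div_mul_cancel₀ _ hα']
        linarith
      · rw [if_neg hα', if_neg hd', mul_neg, mul_comm α, mul_comm d,
          div_mul_cancel₀ _ hα', div_mul_cancel₀ _ hd']
        linarith
    rw [heq]
    have hmem1 : u ∈ convexHull ℝ ({x : Fin m → ℝ | ∀ i, x i = 0 ∨ x i = 1}
        ∪ {x | ∀ i, x i = 0 ∨ x i = -1}) :=
      convexHull_mono Set.subset_union_left (mem_hull01 u hu01)
    have hmem2 : w ∈ convexHull ℝ ({x : Fin m → ℝ | ∀ i, x i = 0 ∨ x i = 1}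
        ∪ {x | ∀ i, x i = 0 ∨ x i = -1}) :=
      convexHull_mono Set.subset_union_right (mem_hull0neg1 w hw01)
    exact (convex_convexHull ℝ _) hmem1 hmem2 hα0 hd0 (by rw [hα]; ring)
  · exact convexHull_min (S_subset_ball hm) (ball_convex hm)

theorem key (m : ℕ) (hm : 0 < m) :
    Set.extremePoints ℝ {x : Fin m → ℝ | Hnorm m x ≤ 1} =
      ({x : Fin m → ℝ | ∀ i, x i = 0 ∨ x i = 1} ∪
        {x : Fin m → ℝ | ∀ i, x i = 0 ∨ x i = -1}) \ {0} := by
  haveI : Nonempty (Fin m) := ⟨⟨0, hm⟩⟩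
  ext z
  constructor
  · intro hz
    have hzS : z ∈ ({x : Fin m → ℝ | ∀ i, x i = 0 ∨ x i = 1}
        ∪ {x | ∀ i, x i = 0 ∨ x i = -1}) := by
      have hz' := hz
      rw [ball_eq_hull hm] at hz'
      exact extremePoints_convexHull_subset hz'
    refine ⟨hzS, ?_⟩
    intro hz0
    rw [Set.mem_singleton_iff] at hz0
    subst hz0
    obtain ⟨h0B, hext⟩ := mem_extremePoints.mp hz
    have hone : (fun _ : Fin m => (1:ℝ)) ∈ {x : Fin m → ℝ | Hnorm m x ≤ 1} := by
      rw [Set.mem_setOf_eq, hnorm_le_one_iff hm]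
      exact ⟨fun i => by norm_num, fun i j => by norm_num⟩
    have hmone : (fun _ : Fin m => (-1:ℝ)) ∈ {x : Fin m → ℝ | Hnorm m x ≤ 1} := by
      rw [Set.mem_setOf_eq, hnorm_le_one_iff hm]
      exact ⟨fun i => by norm_num, fun i j => by norm_num⟩
    have hseg : (0 : Fin m → ℝ) ∈
        openSegment ℝ (fun _ : Fin m => (1:ℝ)) (fun _ : Fin m => (-1:ℝ)) :=
      ⟨1/2, 1/2, by norm_num, by norm_num, by norm_num, by funext i; simp⟩
    have := (hext _ hone _ hmone hseg).1
    have := congrFun this ⟨0, hm⟩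
    norm_num at this
  · rintro ⟨hzS, hz0⟩
    rw [mem_extremePoints]
    refine ⟨S_subset_ball hm hzS, ?_⟩
    intro x hx y hy hseg
    obtain ⟨a, b, ha, hb, hab, habz⟩ := hseg
    rw [Set.mem_setOf_eq, hnorm_le_one_iff hm] at hx hy
    have heval : ∀ i, a * x i + b * y i = z i := fun i => congrFun habz i
    obtain ⟨j, hjz⟩ : ∃ j, z j ≠ 0 := by
      by_contra h
      push_neg at h
      exact hz0 (funext h)
    rcases hzS with h01 | h01
    · -- entries in {0,1}
      have hzj : z j = 1 := (h01 j).resolve_left hjz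
      have key1 : ∀ i, z i = 1 → x i = 1 ∧ y i = 1 := by
        intro i hi
        have hax : a * x i ≤ a := by nlinarith [(hx.1 i).2]
        have hby : b * y i ≤ b := by nlinarith [(hy.1 i).2]
        have he : a * x i + b * y i = 1 := by rw [heval i, hi]
        have h1 : a * x i = a * 1 := by rw [mul_one]; linarith
        have h2 : b * y i = b * 1 := by rw [mul_one]; linarith
        exact ⟨mul_left_cancel₀ (ne_of_gt ha) h1, mul_left_cancel₀ (ne_of_gt hb) h2⟩
      have hxj : x j = 1 := (key1 j hzj).1
      have hyj : y j = 1 := (key1 j hzj).2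
      have key0 : ∀ i, z i = 0 → x i = 0 ∧ y i = 0 := by
        intro i hi
        have hxge : 0 ≤ x i := by have := hx.2 j i; linarith
        have hyge : 0 ≤ y i := by have := hy.2 j i; linarith
        have he : a * x i + b * y i = 0 := by rw [heval i, hi]
        have hax : a * x i = 0 := le_antisymm (by nlinarith [mul_nonneg hb.le hyge])
          (mul_nonneg ha.le hxge)
        have hby : b * y i = 0 := by linarith
        exact ⟨(mul_eq_zero.mp hax).resolve_left (ne_of_gt ha),
          (mul_eq_zero.mp hby).resolve_left (ne_of_gt hb)⟩
      constructor <;> funext i <;> rcases h01 i with h | h <;> rw [h]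
      · exact (key0 i h).1
      · exact (key1 i h).1
      · exact (key0 i h).2
      · exact (key1 i h).2
    · -- entries in {0,-1}
      have hzj : z j = -1 := (h01 j).resolve_left hjz
      have key1 : ∀ i, z i = -1 → x i = -1 ∧ y i = -1 := by
        intro i hi
        have hax : a * (-1) ≤ a * x i := mul_le_mul_of_nonneg_left (hx.1 i).1 ha.le
        have hby : b * (-1) ≤ b * y i := mul_le_mul_of_nonneg_left (hy.1 i).1 hb.le
        have he : a * x i + b * y i = -1 := by rw [heval i, hi]
        have h1 : a * x i = a * (-1) := by nlinarith
        have h2 : b * y i = b * (-1) := by nlinarith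
        exact ⟨mul_left_cancel₀ (ne_of_gt ha) h1, mul_left_cancel₀ (ne_of_gt hb) h2⟩
      have hxj : x j = -1 := (key1 j hzj).1
      have hyj : y j = -1 := (key1 j hzj).2
      have key0 : ∀ i, z i = 0 → x i = 0 ∧ y i = 0 := by
        intro i hi
        have hxle : x i ≤ 0 := by have := hx.2 i j; linarith
        have hyle : y i ≤ 0 := by have := hy.2 i j; linarith
        have he : a * x i + b * y i = 0 := by rw [heval i, hi]
        have hax : a * x i = 0 := le_antisymm (mul_nonpos_of_nonneg_of_nonpos ha.le hxle)
          (by nlinarith [mul_nonpos_of_nonneg_of_nonpos hb.le hyle])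
        have hby : b * y i = 0 := by linarith
        exact ⟨(mul_eq_zero.mp hax).resolve_left (ne_of_gt ha),
          (mul_eq_zero.mp hby).resolve_left (ne_of_gt hb)⟩
      constructor <;> funext i <;> rcases h01 i with h | h <;> rw [h]
      · exact (key0 i h).1
      · exact (key1 i h).1
      · exact (key0 i h).2
      · exact (key1 i h).2

/-- The extreme points of the unit ball of `‖·‖_H` on `ℝ^{n-1}` are
exactly `({0,1}^{n-1} ∪ {0,-1}^{n-1}) \ {0}`. -/
theorem stmt4 (n : ℕ) (hn : 2 ≤ n) :
    Set.extremePoints ℝ {x : Fin (n - 1) → ℝ | Hnorm (n - 1) x ≤ 1} =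
      ({x : Fin (n - 1) → ℝ | ∀ i, x i = 0 ∨ x i = 1} ∪
        {x : Fin (n - 1) → ℝ | ∀ i, x i = 0 ∨ x i = -1}) \ {0} :=
  key (n - 1) (by omega)
end

section
/- Let n ≥ 2 and let x ≠ y be two elements of {0,1}^{n−1} \ {(0,…,0)} that are incomparable in the componentwise order (neither x ≤ y nor y ≤ x); equivalently, x and y are two distinct elements of an antichain of (E_+, ≤). Then no single vector z ∈ ℝ^{n−1} illuminates both x and y as boundary points of the unit ball B_H of ‖·‖_H. The same holds for two distinct incomparable elements of {0,−1}^{n−1} \ {(0,…,0)}. -/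
lemma hnorm_ge_sub (m : ℕ) [Nonempty (Fin m)] (w : Fin m → ℝ) (a b : Fin m) :
    w a - w b ≤ Hnorm m w := by
  have h1 : w a ≤ max (⨆ i, w i) 0 :=
    le_max_of_le_left (le_ciSup (Finite.bddAbove_range w) a)
  have h2 : min (⨅ i, w i) 0 ≤ w b :=
    min_le_of_left_le (ciInf_le (Finite.bddBelow_range w) b)
  unfold Hnorm
  linarith

/-- Two distinct incomparable elements of `E_+ = {0,1}^{n-1} \ {0}`
(or of `E_- = {0,-1}^{n-1} \ {0}`) cannot be illuminated by one single vector. -/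
theorem stmt7 (n : ℕ) (hn : 2 ≤ n) (x y : Fin (n - 1) → ℝ)
    (hmem :
      (x ∈ ({x : Fin (n - 1) → ℝ | ∀ i, x i = 0 ∨ x i = 1} \ {0}) ∧
        y ∈ ({x : Fin (n - 1) → ℝ | ∀ i, x i = 0 ∨ x i = 1} \ {0})) ∨
      (x ∈ ({x : Fin (n - 1) → ℝ | ∀ i, x i = 0 ∨ x i = -1} \ {0}) ∧
        y ∈ ({x : Fin (n - 1) → ℝ | ∀ i, x i = 0 ∨ x i = -1} \ {0})))
    (hne : x ≠ y) (hinc : ¬ x ≤ y ∧ ¬ y ≤ x) :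
    ∀ z : Fin (n - 1) → ℝ,
      ¬ (illum (n - 1) (Hnorm (n - 1)) z x ∧ illum (n - 1) (Hnorm (n - 1)) z y) := by
  intro z hz
  obtain ⟨⟨ε₁, hε₁, h₁⟩, ⟨ε₂, hε₂, h₂⟩⟩ := hz
  haveI : Nonempty (Fin (n - 1)) := ⟨⟨0, by omega⟩⟩
  obtain ⟨a, ha⟩ : ∃ a, y a < x a := by
    by_contra h; push_neg at h; exact hinc.1 h
  obtain ⟨b, hb⟩ : ∃ b, x b < y b := by
    by_contra h; push_neg at h; exact hinc.2 h
  clear hinc hne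
  have key : x a - x b = 1 ∧ y b - y a = 1 := by
    rcases hmem with ⟨⟨hx, _⟩, ⟨hy, _⟩⟩ | ⟨⟨hx, _⟩, ⟨hy, _⟩⟩ <;>
    · rcases hx a with h1 | h1 <;> rcases hy a with h2 | h2 <;>
        rcases hx b with h3 | h3 <;> rcases hy b with h4 | h4 <;>
        constructor <;> linarith
  set l : ℝ := min ε₁ ε₂ / 2 with hl
  have hl0 : 0 < l := by positivity
  have hl1 : l < ε₁ := by
    have := min_le_left ε₁ ε₂; simp only [hl]; linarith
  have hl2 : l < ε₂ := by
    have := min_le_right ε₁ ε₂; simp only [hl]; linarith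
  have hA := h₁ l hl0 hl1
  have hB := h₂ l hl0 hl2
  have gA := hnorm_ge_sub (n - 1) (x + l • z) a b
  have gB := hnorm_ge_sub (n - 1) (y + l • z) b a
  have eA : (x + l • z) a = x a + l * z a := rfl
  have eB : (x + l • z) b = x b + l * z b := rfl
  have eC : (y + l • z) a = y a + l * z a := rfl
  have eD : (y + l • z) b = y b + l * z b := rfl
  rw [eA, eB] at gA
  rw [eC, eD] at gB
  linarith [key.1, key.2]
end

section
/- Let n ≥ 2 and let x, y be extreme points of the unit ball B_H of ‖·‖_H on ℝ^{n−1} (i.e. x, y ∈ ({0,1}^{n−1} ∪ {0,−1}^{n−1}) \ {0}) such that x_i = 1 and y_i = −1 for some index i. Then no single vector w ∈ ℝ^{n−1} illuminates both x and y. -/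
lemma aux_hnorm_bounds {m : ℕ} (z : Fin m → ℝ) (j : Fin m) (h : Hnorm m z < 1) :
    -1 < z j ∧ z j < 1 := by
  unfold Hnorm at h
  have hbdd : BddAbove (Set.range z) := Set.Finite.bddAbove (Set.finite_range z)
  have hbdd' : BddBelow (Set.range z) := Set.Finite.bddBelow (Set.finite_range z)
  have h1 : z j ≤ ⨆ i, z i := le_ciSup hbdd j
  have h2 : (⨅ i, z i) ≤ z j := ciInf_le hbdd' j
  constructor <;>
    nlinarith [min_le_left (⨅ i, z i) (0:ℝ), le_max_left (⨆ i, z i) (0:ℝ),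
      min_le_right (⨅ i, z i) (0:ℝ), le_max_right (⨆ i, z i) (0:ℝ)]

/-- If `x, y` are extreme points of the unit ball of `‖·‖_H` with
`x_i = 1` and `y_i = -1` for some `i`, then no single vector illuminates both. -/
theorem stmt8 (n : ℕ) (hn : 2 ≤ n) (x y : Fin (n - 1) → ℝ)
    (hx : ((∀ i, x i = 0 ∨ x i = 1) ∨ (∀ i, x i = 0 ∨ x i = -1)) ∧ x ≠ 0)
    (hy : ((∀ i, y i = 0 ∨ y i = 1) ∨ (∀ i, y i = 0 ∨ y i = -1)) ∧ y ≠ 0)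
    (i : Fin (n - 1)) (hxi : x i = 1) (hyi : y i = -1) :
    ∀ w : Fin (n - 1) → ℝ,
      ¬ (illum (n - 1) (Hnorm (n - 1)) w x ∧ illum (n - 1) (Hnorm (n - 1)) w y) := by
  rintro w ⟨⟨e1, he1, hX⟩, ⟨e2, he2, hY⟩⟩
  set l := min e1 e2 / 2 with hl
  have hl0 : 0 < l := by positivity
  have hl1 : l < e1 := by
    have := min_le_left e1 e2; simp only [hl]; linarith
  have hl2 : l < e2 := by
    have := min_le_right e1 e2; simp only [hl]; linarith
  have hx' := (aux_hnorm_bounds _ i (hX l hl0 hl1)).2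
  have hy' := (aux_hnorm_bounds _ i (hY l hl0 hl2)).1
  simp only [Pi.add_apply, Pi.smul_apply, smul_eq_mul, hxi, hyi] at hx' hy'
  nlinarith
end

section
/- Let n ≥ 2. Every finite set S ⊆ ℝ^{n−1} that illuminates the unit ball B_H of ‖·‖_H (i.e., every z with ‖z‖_H = 1 is illuminated by some v ∈ S) has cardinality at least the binomial coefficient C(n, ⌈n/2⌉). -/
lemma hnorm_ge {m : ℕ} (w : Fin m → ℝ) (i j : Fin m) :
    max (w i) 0 - min (w j) 0 ≤ Hnorm m w := by
  unfold Hnorm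
  have h1 : w i ≤ ⨆ t, w t := le_ciSup (Set.finite_range w).bddAbove i
  have h2 : (⨅ t, w t) ≤ w j := ciInf_le (Set.finite_range w).bddBelow j
  have h3 : max (w i) 0 ≤ max (⨆ t, w t) 0 := max_le_max h1 le_rfl
  have h4 : min (⨅ t, w t) 0 ≤ min (w j) 0 := min_le_min h2 le_rfl
  linarith

/-- Every finite set illuminating the unit ball of `‖·‖_H` on `ℝ^{n-1}`
has at least `C(n, ⌈n/2⌉)` elements. -/
theorem stmt9 (n : ℕ) (hn : 2 ≤ n) (S : Finset (Fin (n - 1) → ℝ))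
    (hS : ∀ z : Fin (n - 1) → ℝ, Hnorm (n - 1) z = 1 →
      ∃ v ∈ S, illum (n - 1) (Hnorm (n - 1)) v z) :
    Nat.choose n ((n + 1) / 2) ≤ S.card := by
  classical
  have hm : 0 < n - 1 := by omega
  haveI hne : Nonempty (Fin (n - 1)) := ⟨⟨0, hm⟩⟩
  set k := (n + 1) / 2 with hkdef
  have hk1 : 1 ≤ k := by omega
  have hkn : k ≤ n - 1 := by omega
  set last : Fin n := ⟨n - 1, by omega⟩ with hlastdef
  set ι : Fin (n - 1) → Fin n := fun i => ⟨i.1, by omega⟩ with hιdef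
  have hsurj : ∀ x : Fin n, x ≠ last → ∃ i, ι i = x := by
    intro x hx
    have h1 : x.1 ≠ n - 1 := fun h => hx (Fin.ext h)
    have h2 : x.1 < n := x.isLt
    exact ⟨⟨x.1, by omega⟩, rfl⟩
  set Z : Finset (Fin n) → (Fin (n - 1) → ℝ) := fun K i =>
    if last ∈ K then (if ι i ∈ K then 0 else -1) else (if ι i ∈ K then 1 else 0)
    with hZdef
  -- nonemptiness facts
  have hex1 : ∀ K : Finset (Fin n), K.card = k → last ∉ K → ∃ i, ι i ∈ K := by
    intro K hc hl
    obtain ⟨x, hx⟩ := Finset.card_pos.mp (by omega : 0 < K.card)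
    obtain ⟨i, rfl⟩ := hsurj x (by rintro rfl; exact hl hx)
    exact ⟨i, hx⟩
  have hex2 : ∀ K : Finset (Fin n), K.card = k → last ∈ K → ∃ i, ι i ∉ K := by
    intro K hc hl
    have hKne : K ≠ Finset.univ := by
      intro h
      have := Finset.card_univ (α := Fin n)
      rw [h, this, Fintype.card_fin] at hc
      omega
    obtain ⟨x, hx⟩ : ∃ x, x ∉ K := by
      by_contra h
      push_neg at h
      exact hKne (Finset.eq_univ_of_forall h)
    obtain ⟨i, rfl⟩ := hsurj x (by rintro rfl; exact hx hl)
    exact ⟨i, hx⟩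
  -- the test points lie on the unit sphere
  have hnormZ : ∀ K : Finset (Fin n), K.card = k → Hnorm (n - 1) (Z K) = 1 := by
    intro K hc
    by_cases hl : last ∈ K
    · obtain ⟨i0, hi0⟩ := hex2 K hc hl
      have hsup : (⨆ i, Z K i) ≤ 0 := by
        apply ciSup_le
        intro i
        simp only [hZdef, if_pos hl]
        split <;> norm_num
      have hinf : (⨅ i, Z K i) = -1 := by
        apply le_antisymm
        · have := ciInf_le (Set.finite_range (Z K)).bddBelow i0
          simpa [hZdef, hl, hi0] using this
        · apply le_ciInf
          intro i
          simp only [hZdef, if_pos hl]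
          split <;> norm_num
      unfold Hnorm
      rw [hinf, max_eq_right hsup, min_eq_left (by norm_num)]
      norm_num
    · obtain ⟨i0, hi0⟩ := hex1 K hc hl
      have hsup : (⨆ i, Z K i) = 1 := by
        apply le_antisymm
        · apply ciSup_le
          intro i
          simp only [hZdef, if_neg hl]
          split <;> norm_num
        · have := le_ciSup (Set.finite_range (Z K)).bddAbove i0
          simpa [hZdef, hl, hi0] using this
      have hinf : (0 : ℝ) ≤ ⨅ i, Z K i := by
        apply le_ciInf
        intro i
        simp only [hZdef, if_neg hl]
        split <;> norm_num
      unfold Hnorm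
      rw [hsup, max_eq_left (by norm_num), min_eq_right hinf]
      norm_num
  -- key: what illumination of Z K says about v
  have key : ∀ (K : Finset (Fin n)) (v : Fin (n - 1) → ℝ),
      illum (n - 1) (Hnorm (n - 1)) v (Z K) →
      (last ∉ K → (∀ i, ι i ∈ K → v i < 0) ∧
        (∀ i j, ι i ∈ K → ι j ∉ K → v i < v j)) ∧
      (last ∈ K → (∀ i, ι i ∉ K → 0 < v i) ∧
        (∀ i j, ι i ∉ K → ι j ∈ K → v j < v i)) := by
    intro K v hv
    obtain ⟨ε, hε, hv⟩ := hv
    have hlt : Hnorm (n - 1) (Z K + (ε / 2) • v) < 1 := hv _ (by positivity) (by linarith)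
    set l := ε / 2 with hldef
    have hl0 : 0 < l := by positivity
    have hw : ∀ t, (Z K + l • v) t = Z K t + l * v t := fun t => rfl
    have hval : ∀ (t : Fin (n - 1)) (c : ℝ), Z K t = c → (Z K + l • v) t = c + l * v t := by
      intro t c hc
      rw [hw t, hc]
    constructor
    · intro hlast
      constructor
      · intro i hi
        have h1 := hnorm_ge (Z K + l • v) i i
        have e1 : (Z K + l • v) i = 1 + l * v i :=
          hval i 1 (by simp [hZdef, if_neg hlast, if_pos hi])
        rw [e1] at h1
        have h2 : (1 : ℝ) + l * v i ≤ max (1 + l * v i) 0 := le_max_left _ _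
        have h3 : min (1 + l * v i) 0 ≤ 0 := min_le_right _ _
        have h5 : l * v i < l * 0 := by rw [mul_zero]; linarith
        linarith [lt_of_mul_lt_mul_left h5 hl0.le]
      · intro i j hi hj
        have h1 := hnorm_ge (Z K + l • v) i j
        have e1 : (Z K + l • v) i = 1 + l * v i :=
          hval i 1 (by simp [hZdef, if_neg hlast, if_pos hi])
        have e2 : (Z K + l • v) j = 0 + l * v j :=
          hval j 0 (by simp [hZdef, if_neg hlast, if_neg hj])
        rw [e1, e2] at h1
        have h2 : (1 : ℝ) + l * v i ≤ max (1 + l * v i) 0 := le_max_left _ _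
        have h4 : min (0 + l * v j) 0 ≤ 0 + l * v j := min_le_left _ _
        have h5 : l * v i < l * v j := by linarith
        exact lt_of_mul_lt_mul_left h5 hl0.le
    · intro hlast
      constructor
      · intro i hi
        have h1 := hnorm_ge (Z K + l • v) i i
        have e1 : (Z K + l • v) i = -1 + l * v i :=
          hval i (-1) (by simp [hZdef, if_pos hlast, if_neg hi])
        rw [e1] at h1
        have h2 : (0 : ℝ) ≤ max (-1 + l * v i) 0 := le_max_right _ _
        have h3 : min (-1 + l * v i) 0 ≤ -1 + l * v i := min_le_left _ _
        have h5 : l * 0 < l * v i := by rw [mul_zero]; linarith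
        exact lt_of_mul_lt_mul_left h5 hl0.le
      · intro i j hi hj
        have h1 := hnorm_ge (Z K + l • v) j i
        have e1 : (Z K + l • v) i = -1 + l * v i :=
          hval i (-1) (by simp [hZdef, if_pos hlast, if_neg hi])
        have e2 : (Z K + l • v) j = 0 + l * v j :=
          hval j 0 (by simp [hZdef, if_pos hlast, if_pos hj])
        rw [e1, e2] at h1
        have h2 : (0 : ℝ) + l * v j ≤ max (0 + l * v j) 0 := le_max_left _ _
        have h3 : min (-1 + l * v i) 0 ≤ -1 + l * v i := min_le_left _ _
        have h5 : l * v j < l * v i := by linarith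
        exact lt_of_mul_lt_mul_left h5 hl0.le
  -- separation: a single v cannot illuminate two distinct size-k test points
  have hsep : ∀ K1 K2 : Finset (Fin n), K1.card = k → K2.card = k →
      ∀ v : Fin (n - 1) → ℝ, illum (n - 1) (Hnorm (n - 1)) v (Z K1) →
      illum (n - 1) (Hnorm (n - 1)) v (Z K2) → K1 = K2 := by
    intro K1 K2 h1 h2 v hv1 hv2
    by_contra hne12
    have hc1 := key K1 v hv1
    have hc2 := key K2 v hv2
    have hx : (K1 \ K2).Nonempty := by
      rw [Finset.sdiff_nonempty]
      intro hsub
      exact hne12 (Finset.eq_of_subset_of_card_le hsub (by omega))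
    have hy : (K2 \ K1).Nonempty := by
      rw [Finset.sdiff_nonempty]
      intro hsub
      exact hne12 (Finset.eq_of_subset_of_card_le hsub (by omega)).symm
    obtain ⟨x, hx⟩ := hx
    rw [Finset.mem_sdiff] at hx
    obtain ⟨y, hy⟩ := hy
    rw [Finset.mem_sdiff] at hy
    by_cases hl1 : last ∈ K1 <;> by_cases hl2 : last ∈ K2
    · -- both contain last
      obtain ⟨i, rfl⟩ := hsurj x (by rintro rfl; exact hx.2 hl2)
      obtain ⟨j, rfl⟩ := hsurj y (by rintro rfl; exact hy.2 hl1)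
      have a1 := (hc1.2 hl1).2 j i hy.2 hx.1
      have a2 := (hc2.2 hl2).2 i j hx.2 hy.1
      linarith
    · -- last ∈ K1, last ∉ K2 : use y ∈ K2 \ K1
      obtain ⟨j, rfl⟩ := hsurj y (by rintro rfl; exact hl2 hy.1)
      have a1 := (hc1.2 hl1).1 j hy.2
      have a2 := (hc2.1 hl2).1 j hy.1
      linarith
    · -- last ∉ K1, last ∈ K2 : use x ∈ K1 \ K2
      obtain ⟨i, rfl⟩ := hsurj x (by rintro rfl; exact hl1 hx.1)
      have a1 := (hc1.1 hl1).1 i hx.1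
      have a2 := (hc2.2 hl2).1 i hx.2
      linarith
    · -- neither contains last
      obtain ⟨i, rfl⟩ := hsurj x (by rintro rfl; exact hl1 hx.1)
      obtain ⟨j, rfl⟩ := hsurj y (by rintro rfl; exact hl2 hy.1)
      have a1 := (hc1.1 hl1).2 i j hx.1 hy.2
      have a2 := (hc2.1 hl2).2 j i hy.1 hx.2
      linarith
  -- counting
  set T := Finset.powersetCard k (Finset.univ : Finset (Fin n)) with hTdef
  have hTcard : ∀ K ∈ T, K.card = k := fun K hK => (Finset.mem_powersetCard.mp hK).2
  have hchoice : ∀ K : Finset (Fin n), ∃ v : Fin (n - 1) → ℝ,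
      K ∈ T → v ∈ S ∧ illum (n - 1) (Hnorm (n - 1)) v (Z K) := by
    intro K
    by_cases h : K ∈ T
    · obtain ⟨v, hv1, hv2⟩ := hS (Z K) (hnormZ K (hTcard K h))
      exact ⟨v, fun _ => ⟨hv1, hv2⟩⟩
    · exact ⟨0, fun h' => absurd h' h⟩
  choose g hg using hchoice
  have hcard : T.card ≤ S.card := by
    apply Finset.card_le_card_of_injOn g
    · intro K hK
      exact (hg K hK).1
    · intro K1 hK1 K2 hK2 heq
      exact hsep K1 K2 (hTcard K1 hK1) (hTcard K2 hK2) (g K1) (hg K1 hK1).2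
        (heq ▸ (hg K2 hK2).2)
  have hTc : T.card = n.choose k := by
    rw [hTdef, Finset.card_powersetCard, Finset.card_univ, Fintype.card_fin]
  omega
end

section
/- Let n ≥ 2. There exists a finite set S ⊆ ℝ^{n−1} of cardinality exactly C(n, ⌈n/2⌉) that illuminates the unit ball B_H of ‖·‖_H: for every z ∈ ℝ^{n−1} with ‖z‖_H = 1 there exist v ∈ S and ε > 0 such that ‖z + λv‖_H < 1 for all 0 < λ < ε. -/
/-!
On the hyperplane `x_n = 0` of `ℝⁿ`, `‖z‖_H` is the variation `max - min` of `(z, 0)`. A direction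
`w` illuminates `y = (z, 0)` as soon as some threshold `t` has `w ≤ t` on the coordinates where `y`
is maximal and `w > t` where it is minimal: moving along `w` then lowers the maximum relative to
the minimum. So it suffices to find `C(n, ⌈n/2⌉)` vectors whose sublevel sets `{w ≤ t}` include
every subset of `{1, …, n}`. A chain of subsets is realised by the sublevel sets of a single
vector, and the Boolean lattice is partitioned into `C(n, ⌈n/2⌉)` chains: by Hall's theorem and
the local LYM inequality every level below the middle injects into the next one up along
inclusions, and the fibres of the resulting retraction onto the middle level are chains.
-/

open Finset Filter Topology
open scoped FinsetFamily

structure ClimbsTo {β : Type*} [Preorder β] (ρ : β → ℕ) (m : ℕ) (φ : β → β) : Prop where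
  le_apply : ∀ x, ρ x < m → x ≤ φ x
  rank_apply : ∀ x, ρ x < m → ρ (φ x) = ρ x + 1
  apply_eq_self : ∀ x, ρ x = m → φ x = x
  eq_of_apply_eq : ∀ x y, ρ x < m → ρ x = ρ y → φ x = φ y → x = y

namespace ClimbsTo

variable {β : Type*} [Preorder β] {ρ : β → ℕ} {m : ℕ} {φ : β → β}

theorem le_iterate_and_rank (h : ClimbsTo ρ m φ) {x : β} (hx : ρ x ≤ m) (k : ℕ) :
    x ≤ φ^[k] x ∧ ρ (φ^[k] x) = min (ρ x + k) m := by
  induction k with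
  | zero => simpa using hx
  | succ k ih =>
    obtain ⟨hle, hrank⟩ := ih
    rw [Function.iterate_succ_apply']
    rcases (hrank.trans_le (min_le_right _ _)).lt_or_eq with hlt | heq
    · exact ⟨hle.trans (h.le_apply _ hlt), by rw [h.rank_apply _ hlt]; omega⟩
    · rw [h.apply_eq_self _ heq]
      exact ⟨hle, by omega⟩

theorem rank_iterate (h : ClimbsTo ρ m φ) {x : β} (hx : ρ x ≤ m) {k : ℕ} (hk : m ≤ k) :
    ρ (φ^[k] x) = m := by
  rw [(h.le_iterate_and_rank hx k).2]
  omega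

theorem eq_of_iterate_eq (h : ClimbsTo ρ m φ) {x y : β} (hxy : ρ x = ρ y) (hx : ρ x ≤ m)
    (k : ℕ) (he : φ^[k] x = φ^[k] y) : x = y := by
  induction k generalizing x y with
  | zero => exact he
  | succ k ih =>
    rw [Function.iterate_succ_apply, Function.iterate_succ_apply] at he
    rcases hx.lt_or_eq with hlt | heq
    · have hx' := h.rank_apply x hlt
      have hy' := h.rank_apply y (hxy ▸ hlt)
      exact h.eq_of_apply_eq x y hlt hxy (ih (by omega) (by omega) he)
    · rw [h.apply_eq_self x heq, h.apply_eq_self y (hxy ▸ heq)] at he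
      exact ih hxy hx he

theorem le_of_iterate_eq (h : ClimbsTo ρ m φ) {x y : β} (hxy : ρ x ≤ ρ y) (hy : ρ y ≤ m)
    {k : ℕ} (hk : m ≤ k) (he : φ^[k] x = φ^[k] y) : x ≤ y := by
  obtain ⟨hle, hrank⟩ := h.le_iterate_and_rank (hxy.trans hy) (ρ y - ρ x)
  refine hle.trans (h.eq_of_iterate_eq (by omega) (by omega) k ?_).le
  rw [← Function.iterate_add_apply, add_comm, Function.iterate_add_apply,
    Function.iterate_fixed (h.apply_eq_self _ (h.rank_iterate (hxy.trans hy) hk)), he]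

theorem le_or_le_of_iterate_eq (h : ClimbsTo ρ m φ) {x y : β} (hx : ρ x ≤ m) (hy : ρ y ≤ m)
    {k : ℕ} (hk : m ≤ k) (he : φ^[k] x = φ^[k] y) : x ≤ y ∨ y ≤ x := by
  rcases le_total (ρ x) (ρ y) with hxy | hyx
  · exact .inl (h.le_of_iterate_eq hxy hy hk he)
  · exact .inr (h.le_of_iterate_eq hyx hx hk he.symm)

end ClimbsTo

variable {α : Type*} [DecidableEq α]

theorem mem_iff_card_filter_le_of_isChain {𝒞 : Finset (Finset α)}
    (h𝒞 : IsChain (· ⊆ ·) (𝒞 : Set (Finset α))) {A : Finset α} (hA : A ∈ 𝒞) (i : α) :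
    i ∈ A ↔ #{B ∈ 𝒞 | i ∉ B} ≤ #{B ∈ 𝒞 | B ⊂ A} := by
  refine ⟨fun hi => card_le_card fun B hB => ?_, fun hle => ?_⟩
  · obtain ⟨hB𝒞, hiB⟩ := mem_filter.1 hB
    refine mem_filter.2 ⟨hB𝒞, ?_⟩
    rcases h𝒞.total hB𝒞 hA with hBA | hAB
    · exact ssubset_of_subset_of_ne hBA (by rintro rfl; exact hiB hi)
    · exact absurd (hAB hi) hiB
  · by_contra hi
    have hsub : insert A {B ∈ 𝒞 | B ⊂ A} ⊆ {B ∈ 𝒞 | i ∉ B} := by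
      refine insert_subset (mem_filter.2 ⟨hA, hi⟩) fun B hB => ?_
      obtain ⟨hB𝒞, hBA⟩ := mem_filter.1 hB
      exact mem_filter.2 ⟨hB𝒞, fun hiB => hi (hBA.subset hiB)⟩
    have := card_le_card hsub
    rw [card_insert_of_notMem (fun h => (mem_filter.1 h).2.ne rfl)] at this
    omega

variable [Fintype α]

theorem exists_injOn_shadow_of_card_lt {r : ℕ} (hr : Fintype.card α < 2 * r) :
    ∃ f : Finset α → Finset α, Set.InjOn f {s | #s = r} ∧
      ∀ s, #s = r → f s ⊆ s ∧ #(f s) + 1 = r := by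
  have hall : ∀ 𝒮 : Finset {s : Finset α // #s = r},
      #𝒮 ≤ #(𝒮.biUnion fun s => (s : Finset α).powersetCard (r - 1)) := by
    intro 𝒮
    set 𝒜 := 𝒮.map (Function.Embedding.subtype _)
    have hsized : (𝒜 : Set (Finset α)).Sized r := by
      rintro _ hs
      obtain ⟨s, -, rfl⟩ := mem_map.1 hs
      exact s.2
    have hshadow : ∂ 𝒜 ⊆ 𝒮.biUnion fun s => (s : Finset α).powersetCard (r - 1) := by
      intro t ht
      obtain ⟨_, hs, hts, hcard⟩ := mem_shadow_iff_exists_mem_card_add_one.1 ht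
      obtain ⟨s, hs𝒮, rfl⟩ := mem_map.1 hs
      exact mem_biUnion.2 ⟨s, hs𝒮, mem_powersetCard.2 ⟨hts, by simp [s.2] at hcard; omega⟩⟩
    have hlym := local_lubell_yamamoto_meshalkin_inequality_mul hsized
    calc #𝒮 = #𝒜 := (card_map _).symm
      _ ≤ #(∂ 𝒜) := le_of_mul_le_mul_right
          (hlym.trans (Nat.mul_le_mul_left _ (by omega))) (by omega : 0 < r)
      _ ≤ _ := card_le_card hshadow
  obtain ⟨f, hf_inj, hf⟩ := (all_card_le_biUnion_card_iff_exists_injective _).1 hall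
  refine ⟨fun s => if hs : #s = r then f ⟨s, hs⟩ else s, fun s hs t ht hst => ?_, fun s hs => ?_⟩
  · simp only [dif_pos (show #s = r from hs), dif_pos (show #t = r from ht)] at hst
    exact congrArg Subtype.val (hf_inj hst)
  · obtain ⟨hsub, hcard⟩ := mem_powersetCard.1 (hf ⟨s, hs⟩)
    simp only [dif_pos hs]
    exact ⟨hsub, by omega⟩

theorem exists_climbsTo {k : ℕ} (hk : 2 * k ≤ Fintype.card α + 1) :
    ∃ φ : Finset α → Finset α, ClimbsTo card k φ := by
  choose! d hd_inj hd using fun r (hr : Fintype.card α < 2 * r) =>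
    exists_injOn_shadow_of_card_lt (α := α) hr
  have hcompl : ∀ s : Finset α, #s < k →
      Fintype.card α < 2 * (Fintype.card α - #s) ∧ #sᶜ = Fintype.card α - #s :=
    fun s hs => ⟨by omega, card_compl s⟩
  refine ⟨fun s => if #s < k then (d (Fintype.card α - #s) sᶜ)ᶜ else s, ⟨?_, ?_, ?_, ?_⟩⟩
  · intro s hs
    simp only [if_pos hs]
    exact subset_compl_comm.1 (hd _ (hcompl s hs).1 _ (hcompl s hs).2).1
  · intro s hs
    have := (hd _ (hcompl s hs).1 _ (hcompl s hs).2).2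
    simp only [if_pos hs, card_compl] at this ⊢
    omega
  · intro s hs
    simp [hs]
  · intro s t hs hst h
    simp only [if_pos hs, compl_inj_iff, ← hst] at h
    simpa using hd_inj _ (hcompl s hs).1 (hcompl s hs).2 (hst ▸ (hcompl t (hst ▸ hs)).2) h

theorem exists_chain_partition : ∃ g : Finset α → Finset α,
    (∀ s, #(g s) = (Fintype.card α + 1) / 2) ∧ ∀ s t, g s = g t → s ⊆ t ∨ t ⊆ s := by
  set N := Fintype.card α
  set m := (N + 1) / 2
  obtain ⟨φ, hφ⟩ := exists_climbsTo (α := α) (k := m) (by omega)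
  obtain ⟨ψ, hψ⟩ := exists_climbsTo (α := α) (k := N - m) (by omega)
  -- Sets above the middle level descend to it by letting their complements climb.
  refine ⟨fun s => if #s ≤ m then φ^[m] s else (ψ^[N - m] sᶜ)ᶜ, fun s => ?_, fun s t h => ?_⟩
  · dsimp only
    split_ifs with hs
    · exact hφ.rank_iterate hs le_rfl
    · rw [card_compl, hψ.rank_iterate (by rw [card_compl]; omega) le_rfl]
      omega
  · dsimp only at h
    split_ifs at h with hs ht ht
    · exact hφ.le_or_le_of_iterate_eq hs ht le_rfl h
    · left
      calc s ⊆ φ^[m] s := (hφ.le_iterate_and_rank hs m).1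
        _ = (ψ^[N - m] tᶜ)ᶜ := h
        _ ⊆ t := compl_le_iff_compl_le.1 (hψ.le_iterate_and_rank (by rw [card_compl]; omega) _).1
    · right
      calc t ⊆ φ^[m] t := (hφ.le_iterate_and_rank ht m).1
        _ = (ψ^[N - m] sᶜ)ᶜ := h.symm
        _ ⊆ s := compl_le_iff_compl_le.1 (hψ.le_iterate_and_rank (by rw [card_compl]; omega) _).1
    · rw [compl_inj_iff] at h
      simpa [or_comm] using hψ.le_or_le_of_iterate_eq (by rw [card_compl]; omega)
        (by rw [card_compl]; omega) le_rfl h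

theorem exists_separating_family : ∃ W : Finset (α → ℝ),
    #W ≤ (Fintype.card α).choose ((Fintype.card α + 1) / 2) ∧
      ∀ A : Finset α, ∃ w ∈ W, ∃ t : ℝ, ∀ i, w i ≤ t ↔ i ∈ A := by
  obtain ⟨g, hg_card, hg_chain⟩ := exists_chain_partition (α := α)
  have hchain : ∀ T, IsChain (· ⊆ ·) (univ.filter (g · = T) : Set (Finset α)) := by
    intro T B hB C hC _
    exact hg_chain B C ((mem_filter.1 (mem_coe.1 hB)).2.trans (mem_filter.1 (mem_coe.1 hC)).2.symm)
  let w : Finset α → α → ℝ := fun T i => #{B ∈ univ.filter (g · = T) | i ∉ B}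
  refine ⟨(powersetCard ((Fintype.card α + 1) / 2) univ).image w,
    card_image_le.trans (by rw [card_powersetCard, card_univ]), fun A => ?_⟩
  refine ⟨w (g A), mem_image_of_mem _ (mem_powersetCard_univ.2 (hg_card A)),
    #{B ∈ univ.filter (g · = g A) | B ⊂ A}, fun i => ?_⟩
  rw [Nat.cast_le, mem_iff_card_filter_le_of_isChain (hchain (g A)) (by simp) i]

theorem eventually_add_mul_lt {a c : ℝ} (h : a < c) (b d : ℝ) :
    ∀ᶠ l in 𝓝 (0 : ℝ), a + l * b < c + l * d :=
  ContinuousAt.eventually_lt (by fun_prop) (by fun_prop) (by simpa using h)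

theorem eventually_vnorm_add_smul_lt {n : ℕ} [NeZero n] {y w : Fin n → ℝ} {t : ℝ}
    (hmax : ∀ i, y i = ⨆ j, y j → w i ≤ t) (hmin : ∀ i, y i = ⨅ j, y j → t < w i) :
    ∀ᶠ l in 𝓝[>] (0 : ℝ), vnorm n (y + l • w) < vnorm n y := by
  have hup : ∀ i, ∀ᶠ l in 𝓝[>] (0 : ℝ), y i + l * w i ≤ (⨆ j, y j) + l * t := by
    intro i
    rcases (le_ciSup (Finite.bddAbove_range y) i).lt_or_eq with hlt | heq
    · exact ((eventually_add_mul_lt hlt _ _).filter_mono nhdsWithin_le_nhds).mono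
        fun _ => le_of_lt
    · filter_upwards [self_mem_nhdsWithin] with l (hl : 0 < l)
      rw [heq]
      gcongr
      exact hmax i heq
  have hlow : ∀ i, ∀ᶠ l in 𝓝[>] (0 : ℝ), (⨅ j, y j) + l * t < y i + l * w i := by
    intro i
    rcases (ciInf_le (Finite.bddBelow_range y) i).lt_or_eq with hlt | heq
    · exact (eventually_add_mul_lt hlt _ _).filter_mono nhdsWithin_le_nhds
    · filter_upwards [self_mem_nhdsWithin] with l (hl : 0 < l)
      rw [heq]
      gcongr
      exact hmin i heq.symm
  filter_upwards [eventually_all.2 hup, eventually_all.2 hlow] with l hl_up hl_low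
  obtain ⟨j, hj⟩ := exists_eq_ciInf_of_finite (f := y + l • w)
  have hsup : ⨆ i, (y + l • w) i ≤ (⨆ j, y j) + l * t := ciSup_le hl_up
  have hinf := hl_low j
  rw [vnorm, vnorm, ← hj]
  simp only [Pi.add_apply, Pi.smul_apply, smul_eq_mul] at hsup ⊢
  linarith

theorem hnorm_eq_vnorm_snoc {m : ℕ} [NeZero m] (z : Fin m → ℝ) :
    Hnorm m z = vnorm (m + 1) (Fin.snoc z 0) := by
  have hne := Set.range_nonempty z
  have hfin := Set.finite_range z
  rw [Hnorm, vnorm, ← sSup_range, ← sInf_range, ← sSup_range, ← sInf_range, Fin.range_snoc,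
    csSup_insert hfin.bddAbove hne, csInf_insert hfin.bddBelow hne, max_comm, min_comm]

theorem illum_of_eventually {m : ℕ} {nrm : (Fin m → ℝ) → ℝ} {v z : Fin m → ℝ}
    (h : ∀ᶠ l in 𝓝[>] (0 : ℝ), nrm (z + l • v) < 1) : illum m nrm v z := by
  obtain ⟨ε, hε, hsub⟩ := mem_nhdsGT_iff_exists_Ioo_subset.1 h
  exact ⟨ε, hε, fun l hl hlε => hsub ⟨hl, hlε⟩⟩

theorem exists_illuminating_set (m : ℕ) [NeZero m] : ∃ S : Finset (Fin m → ℝ),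
    #S ≤ (m + 1).choose ((m + 1 + 1) / 2) ∧
      ∀ z, Hnorm m z = 1 → ∃ v ∈ S, illum m (Hnorm m) v z := by
  obtain ⟨W, hWcard, hW⟩ := exists_separating_family (α := Fin (m + 1))
  rw [Fintype.card_fin] at hWcard
  let F : (Fin (m + 1) → ℝ) → Fin m → ℝ := fun w i => w i.castSucc - w (Fin.last m)
  refine ⟨W.image F, card_image_le.trans hWcard, fun z hz => ?_⟩
  set y : Fin (m + 1) → ℝ := Fin.snoc z 0
  have hy : vnorm (m + 1) y = 1 := (hnorm_eq_vnorm_snoc z).symm.trans hz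
  obtain ⟨w, hwW, t, hwt⟩ := hW {i | y i = ⨆ j, y j}
  refine ⟨F w, mem_image_of_mem F hwW, illum_of_eventually ?_⟩
  have hsnoc : ∀ l : ℝ, (Fin.snoc (z + l • F w) 0 : Fin (m + 1) → ℝ) =
      y + l • fun j => w j - w (Fin.last m) := by
    intro l
    ext j
    induction j using Fin.lastCases <;> simp [y, F]
  have hmax : ∀ i, y i = ⨆ j, y j → w i - w (Fin.last m) ≤ t - w (Fin.last m) :=
    fun i hi => sub_le_sub_right ((hwt i).2 (by simpa using hi)) _
  have hmin : ∀ i, y i = ⨅ j, y j → t - w (Fin.last m) < w i - w (Fin.last m) := by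
    intro i hi
    rw [sub_lt_sub_iff_right, ← not_le, hwt]
    intro hi'
    have : (⨆ j, y j) = ⨅ j, y j := (mem_filter.1 hi').2.symm.trans hi
    rw [vnorm, this, sub_self] at hy
    exact zero_ne_one hy
  filter_upwards [eventually_vnorm_add_smul_lt hmax hmin] with l hl
  rwa [hnorm_eq_vnorm_snoc, hsnoc, ← hy]

/-- There is a set of exactly `C(n, ⌈n/2⌉)` vectors illuminating the
unit ball of `‖·‖_H` on `ℝ^{n-1}`. -/
theorem stmt10 (n : ℕ) (hn : 2 ≤ n) :
    ∃ S : Finset (Fin (n - 1) → ℝ), S.card = Nat.choose n ((n + 1) / 2) ∧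
      ∀ z : Fin (n - 1) → ℝ, Hnorm (n - 1) z = 1 →
        ∃ v ∈ S, illum (n - 1) (Hnorm (n - 1)) v z := by
  obtain ⟨m, rfl⟩ : ∃ m, n = m + 1 := ⟨n - 1, by omega⟩
  have : NeZero m := ⟨by omega⟩
  obtain ⟨S₀, hS₀card, hS₀⟩ := exists_illuminating_set m
  obtain ⟨S, hS₀S, hScard⟩ := Infinite.exists_superset_card_eq S₀ _ hS₀card
  exact ⟨S, hScard, fun z hz => (hS₀ z hz).imp fun v ⟨hv, hvz⟩ => ⟨hS₀S hv, hvz⟩⟩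
end

section
/- Let n ≥ 2 and let C be a chain (a totally ordered subset under the componentwise order) in E_+ := {0,1}^{n−1} \ {(0,…,0)}, or in E_− := {0,−1}^{n−1} \ {(0,…,0)}. Then there exists a single vector w ∈ ℝ^{n−1} that illuminates every element of C as a boundary point of the unit ball B_H of ‖·‖_H. -/
lemma neg_ciSup {m : ℕ} [Nonempty (Fin m)] (f : Fin m → ℝ) :
    (⨆ i, -f i) = -⨅ i, f i := by
  apply le_antisymm
  · exact ciSup_le fun i => neg_le_neg (ciInf_le (Set.finite_range f).bddBelow i)
  · rw [neg_le]
    exact le_ciInf fun i => by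
      have := le_ciSup (Set.finite_range fun i => -f i).bddAbove i
      linarith

lemma Hnorm_neg {m : ℕ} [Nonempty (Fin m)] (x : Fin m → ℝ) :
    Hnorm m (-x) = Hnorm m x := by
  have h1 : (⨆ i, (-x) i) = -⨅ i, x i := neg_ciSup x
  have h2 : (⨅ i, (-x) i) = -⨆ i, x i := by
    have := neg_ciSup (fun i => -x i)
    simp only [neg_neg] at this
    have h' : (⨅ i, (-x) i) = ⨅ i, -x i := rfl
    rw [h']
    linarith
  have hmax : ∀ a : ℝ, max (-a) 0 = -min a 0 := by
    intro a
    rcases le_total a 0 with h | h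
    · rw [max_eq_left (by linarith), min_eq_left h]
    · rw [max_eq_right (by linarith), min_eq_right h, neg_zero]
  have hmin : ∀ a : ℝ, min (-a) 0 = -max a 0 := by
    intro a
    rcases le_total a 0 with h | h
    · rw [min_eq_right (by linarith), max_eq_right h, neg_zero]
    · rw [min_eq_left (by linarith), max_eq_left h]
  simp only [Hnorm, h1, h2, hmax, hmin]
  ring

lemma illum_aux (m : ℕ) [Nonempty (Fin m)] (z w : Fin m → ℝ) (c : ℝ)
    (hz : ∀ i, z i = 0 ∨ z i = 1)
    (hc : c ≤ -1)
    (hS : ∀ i, z i = 1 → w i ≤ c)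
    (hSc : ∀ j, z j = 0 → c + 1 ≤ w j ∧ w j ≤ 0) :
    illum m (Hnorm m) w z := by
  set W : ℝ := (Finset.univ.sup' Finset.univ_nonempty fun i => |w i|) ⊔ |c| with hW
  have hW0 : 0 ≤ W := le_trans (abs_nonneg c) le_sup_right
  have hwW : ∀ i, |w i| ≤ W := fun i =>
    le_trans (Finset.le_sup' (fun i => |w i|) (Finset.mem_univ i)) le_sup_left
  have hcW : |c| ≤ W := le_sup_right
  refine ⟨1 / (2 * W + 2), by positivity, fun l hl hlε => ?_⟩
  have hlW : l * (2 * W + 2) < 1 := by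
    rw [div_eq_inv_mul, mul_one] at hlε
    calc l * (2 * W + 2) < (2 * W + 2)⁻¹ * (2 * W + 2) := by
          apply mul_lt_mul_of_pos_right hlε; positivity
      _ = 1 := by field_simp
  have hcabs := abs_le.mp hcW
  -- coordinate bounds
  have h1 : ∀ i, z i + l * w i ≤ 1 + l * c := by
    intro i
    rcases hz i with h | h
    · rw [h]
      have := (hSc i h).2
      nlinarith
    · rw [h]
      have := hS i h
      nlinarith
  have h2 : ∀ i, l * (c + 1) ≤ z i + l * w i := by
    intro i
    rcases hz i with h | h
    · rw [h]
      have := (hSc i h).1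
      nlinarith
    · rw [h]
      have hwi := abs_le.mp (hwW i)
      nlinarith
  have hcoord : ∀ i, (z + l • w) i = z i + l * w i := fun i => by
    simp [Pi.add_apply, Pi.smul_apply, smul_eq_mul]
  have hsup : (⨆ i, (z + l • w) i) ≤ 1 + l * c :=
    ciSup_le fun i => by rw [hcoord i]; exact h1 i
  have hinf : l * (c + 1) ≤ ⨅ i, (z + l • w) i :=
    le_ciInf fun i => by rw [hcoord i]; exact h2 i
  have h1lc : 0 ≤ 1 + l * c := by nlinarith
  have hlc1 : l * (c + 1) ≤ 0 := by nlinarith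
  have hmax : max (⨆ i, (z + l • w) i) 0 ≤ 1 + l * c := max_le hsup h1lc
  have hmin : l * (c + 1) ≤ min (⨅ i, (z + l • w) i) 0 := le_min hinf hlc1
  have : Hnorm m (z + l • w) ≤ 1 - l := by
    simp only [Hnorm]; nlinarith
  linarith

lemma pos_case (m : ℕ) [Nonempty (Fin m)] (C : Set (Fin m → ℝ))
    (hC : C ⊆ ({x : Fin m → ℝ | ∀ i, x i = 0 ∨ x i = 1} \ {0}))
    (hchain : IsChain (· ≤ ·) C) :
    ∃ w : Fin m → ℝ, ∀ x ∈ C, illum m (Hnorm m) w x := by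
  have hSfin : ({x : Fin m → ℝ | ∀ i, x i = 0 ∨ x i = 1}).Finite := by
    have : ({x : Fin m → ℝ | ∀ i, x i = 0 ∨ x i = 1}) =
        Set.pi Set.univ (fun _ => ({0, 1} : Set ℝ)) := by
      ext x; simp [Set.mem_pi]
    rw [this]
    exact Set.Finite.pi fun _ => (Set.finite_singleton (1:ℝ)).insert 0
  have hCfin : C.Finite := hSfin.subset (fun x hx => (hC hx).1)
  classical
  set F := hCfin.toFinset with hF
  set cnt : Fin m → ℕ := fun i => (F.filter fun z => z i = 1).card with hcnt
  set w : Fin m → ℝ := fun i => -(cnt i : ℝ) with hwdef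
  refine ⟨w, fun x hx => ?_⟩
  obtain ⟨hx01, hx0⟩ := hC hx
  have hx0' : x ≠ 0 := hx0
  -- the support of x is nonempty
  have hT : ∃ i, x i = 1 := by
    by_contra h
    push_neg at h
    apply hx0'
    funext i
    rcases hx01 i with h' | h'
    · exact h'
    · exact absurd h' (h i)
  set T : Finset (Fin m) := Finset.univ.filter fun i => x i = 1 with hTdef
  have hTne : T.Nonempty := by
    obtain ⟨i, hi⟩ := hT
    exact ⟨i, by simp [hTdef, hi]⟩
  set c : ℝ := T.sup' hTne w with hcdef
  have hxF : x ∈ F := hCfin.mem_toFinset.mpr hx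
  -- cnt i ≥ 1 for i in support
  have hcnt1 : ∀ i, x i = 1 → 1 ≤ cnt i := by
    intro i hi
    apply Finset.card_pos.mpr
    exact ⟨x, Finset.mem_filter.mpr ⟨hxF, hi⟩⟩
  -- cnt j < cnt i for i in support, j out
  have hcntlt : ∀ i j, x i = 1 → x j = 0 → cnt j < cnt i := by
    intro i j hi hj
    apply Finset.card_lt_card
    rw [Finset.ssubset_iff_of_subset]
    · exact ⟨x, Finset.mem_filter.mpr ⟨hxF, hi⟩, by simp [hj]⟩
    · intro z hz
      rw [Finset.mem_filter] at hz ⊢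
      obtain ⟨hzF, hzj⟩ := hz
      have hzC : z ∈ C := hCfin.mem_toFinset.mp hzF
      obtain ⟨hz01, _⟩ := hC hzC
      refine ⟨hzF, ?_⟩
      have hne : x ≠ z := fun h => by rw [← h] at hzj; rw [hj] at hzj; norm_num at hzj
      rcases hchain hx hzC hne with hle | hle
      · -- x ≤ z, so z i ≥ 1, and z i ∈ {0,1}, so z i = 1
        have := hle i
        rw [hi] at this
        rcases hz01 i with h' | h'
        · rw [h'] at this; norm_num at this
        · exact h'
      · -- z ≤ x: contradiction since z j = 1 > 0 = x j
        have := hle j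
        rw [hj, hzj] at this
        norm_num at this
  have hc1 : c ≤ -1 := by
    apply Finset.sup'_le
    intro i hi
    have hi' : x i = 1 := (Finset.mem_filter.mp hi).2
    have := hcnt1 i hi'
    simp only [hwdef]
    have : (1 : ℝ) ≤ (cnt i : ℝ) := by exact_mod_cast this
    linarith
  apply illum_aux m x w c hx01 hc1
  · intro i hi
    exact Finset.le_sup' w (by simp [hTdef, hi])
  · intro j hj
    constructor
    · have : c ≤ w j - 1 := by
        apply Finset.sup'_le
        intro i hi
        have hi' : x i = 1 := (Finset.mem_filter.mp hi).2
        have hlt := hcntlt i j hi' hj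
        have : (cnt j : ℝ) + 1 ≤ (cnt i : ℝ) := by exact_mod_cast Nat.succ_le_of_lt hlt
        simp only [hwdef]
        linarith
      linarith
    · show -(cnt j : ℝ) ≤ 0
      simp


/-- Every chain in `E_+ = {0,1}^{n-1} \ {0}` or in
`E_- = {0,-1}^{n-1} \ {0}` (componentwise order) can be illuminated by one vector. -/
theorem stmt11 (n : ℕ) (hn : 2 ≤ n) (C : Set (Fin (n - 1) → ℝ))
    (hC : C ⊆ ({x : Fin (n - 1) → ℝ | ∀ i, x i = 0 ∨ x i = 1} \ {0}) ∨
          C ⊆ ({x : Fin (n - 1) → ℝ | ∀ i, x i = 0 ∨ x i = -1} \ {0}))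
    (hchain : IsChain (· ≤ ·) C) :
    ∃ w : Fin (n - 1) → ℝ, ∀ x ∈ C, illum (n - 1) (Hnorm (n - 1)) w x := by
  haveI : Nonempty (Fin (n - 1)) := ⟨⟨0, by omega⟩⟩
  rcases hC with hC | hC
  · exact pos_case (n - 1) C hC hchain
  · -- negate
    set C' : Set (Fin (n - 1) → ℝ) := Neg.neg '' C with hC'def
    have hC' : C' ⊆ ({x : Fin (n - 1) → ℝ | ∀ i, x i = 0 ∨ x i = 1} \ {0}) := by
      rintro y ⟨x, hx, rfl⟩
      obtain ⟨hx01, hx0⟩ := hC hx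
      constructor
      · intro i
        rcases hx01 i with h | h
        · left; simp [h]
        · right; simp [h]
      · simp only [Set.mem_singleton_iff] at hx0 ⊢
        intro h
        apply hx0
        have : x = -(-x) := by simp
        rw [this, h]; simp
    have hchain' : IsChain (· ≤ ·) C' := by
      rintro _ ⟨a, ha, rfl⟩ _ ⟨b, hb, rfl⟩ hne
      have hab : a ≠ b := fun h => hne (by rw [h])
      rcases hchain ha hb hab with h | h
      · right; exact neg_le_neg h
      · left; exact neg_le_neg h
    obtain ⟨w, hw⟩ := pos_case (n - 1) C' hC' hchain'
    refine ⟨-w, fun x hx => ?_⟩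
    obtain ⟨ε, hε, h⟩ := hw (-x) ⟨x, hx, rfl⟩
    refine ⟨ε, hε, fun l hl hlε => ?_⟩
    have := h l hl hlε
    have heq : x + l • (-w) = -(-x + l • w) := by
      funext i; simp; ring
    rw [heq, Hnorm_neg]
    exact this
end

section
/- Let n ≥ 2 and let w ∈ ℝ^{n−1} satisfy w_1 < w_2 < … < w_{n−1} < 0. For each k ∈ {1,…,n−1}, let c^k ∈ {0,1}^{n−1} be the vector with c^k_i = 1 for i ≤ k and c^k_i = 0 for i > k. Then w illuminates every element c^1, c^2, …, c^{n−1} of this maximal chain as boundary points of the unit ball B_H of ‖·‖_H; that is, for each k there exists ε > 0 with ‖c^k + λw‖_H < 1 for all 0 < λ < ε. -/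
/-!
Write `c^k = 1_{[0, p]}` with `p = k - 1`. For small `l > 0` the coordinates of `c^k + l w`
with index `≤ p` lie in `(0, 1 + l w_p]`, since `w` increases, and the remaining ones are
`l w_i ∈ [l w_{p+1}, 0)`. Hence `‖c^k + l w‖_H ≤ 1 + l w_p - l w_{p+1} < 1`, with `w_{p+1}`
replaced by `0` when `p` is the last index.
-/

theorem Hnorm_le_of_forall_mem_Icc {m : ℕ} {x : Fin m → ℝ} {a b : ℝ} (ha : a ≤ 0) (hb : 0 ≤ b)
    (hx : ∀ i, x i ∈ Set.Icc a b) : Hnorm m x ≤ b - a := by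
  have hsup : max (⨆ i, x i) 0 ≤ b := max_le (Real.iSup_le (fun i => (hx i).2) hb) hb
  have hinf : a ≤ min (⨅ i, x i) 0 := le_min (Real.le_iInf (fun i => (hx i).1) ha) ha
  unfold Hnorm
  linarith

section Chain

variable {m : ℕ} {w : Fin m → ℝ} {l : ℝ}

theorem exists_tail_lower_bound_gt (hw : StrictMono w) (hneg : ∀ i, w i < 0) (hl : 0 < l)
    (p : Fin m) : ∃ a, l * w p < a ∧ a ≤ 0 ∧ ∀ i, p < i → a ≤ l * w i := by
  by_cases hlast : (p : ℕ) + 1 < m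
  · let q : Fin m := ⟨p + 1, hlast⟩
    have hpq : p < q := Fin.lt_def.2 (Nat.lt_succ_self _)
    refine ⟨l * w q, mul_lt_mul_of_pos_left (hw hpq) hl,
      (mul_neg_of_pos_of_neg hl (hneg q)).le, fun i hi => ?_⟩
    exact mul_le_mul_of_nonneg_left (hw.monotone (Fin.le_def.2 (Fin.lt_def.1 hi))) hl.le
  · refine ⟨0, mul_neg_of_pos_of_neg hl (hneg p), le_rfl, fun i hi => ?_⟩
    have := Fin.lt_def.1 hi
    omega

theorem chain_add_smul_apply_mem_Icc (hw : Monotone w) (hneg : ∀ i, w i < 0) (hl : 0 ≤ l)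
    (hpos : ∀ i, 0 < 1 + l * w i) {a : ℝ} (ha : a ≤ 0) {k : ℕ} {p : Fin m} (hp : (p : ℕ) + 1 = k)
    (htail : ∀ i, p < i → a ≤ l * w i) (i : Fin m) :
    ((fun j : Fin m => if (j : ℕ) < k then (1 : ℝ) else 0) + l • w) i ∈
      Set.Icc a (1 + l * w p) := by
  simp only [Pi.add_apply, Pi.smul_apply, smul_eq_mul]
  by_cases hik : (i : ℕ) < k
  · have hip : i ≤ p := Fin.le_def.2 (by omega)
    rw [if_pos hik]
    exact ⟨ha.trans (hpos i).le, by gcongr; exact hw hip⟩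
  · have hpi : p < i := Fin.lt_def.2 (by omega)
    rw [if_neg hik, zero_add]
    exact ⟨htail i hpi, (mul_nonpos_of_nonneg_of_nonpos hl (hneg i).le).trans (hpos p).le⟩

end Chain

theorem stmt12_general (n : ℕ) (w : Fin (n - 1) → ℝ)
    (hmono : StrictMono w) (hneg : ∀ i, w i < 0) :
    ∀ k : ℕ, 1 ≤ k → k ≤ n - 1 →
      illum (n - 1) (Hnorm (n - 1)) w (fun i => if (i : ℕ) < k then 1 else 0) := by
  intro k hk1 hk2
  let first : Fin (n - 1) := ⟨0, by omega⟩
  let p : Fin (n - 1) := ⟨k - 1, by omega⟩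
  refine ⟨-1 / w first, div_pos_of_neg_of_neg (by norm_num) (hneg first), fun l hl hlε => ?_⟩
  have hpos : ∀ i, 0 < 1 + l * w i := by
    intro i
    have hfirst : -1 < l * w first := by rwa [lt_div_iff_of_neg (hneg first)] at hlε
    have : l * w first ≤ l * w i :=
      mul_le_mul_of_nonneg_left (hmono.monotone (Fin.le_def.2 (Nat.zero_le _))) hl.le
    linarith
  obtain ⟨a, hpa, ha0, htail⟩ := exists_tail_lower_bound_gt hmono hneg hl p
  calc Hnorm (n - 1) ((fun i : Fin (n - 1) => if (i : ℕ) < k then 1 else 0) + l • w)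
      ≤ 1 + l * w p - a :=
        Hnorm_le_of_forall_mem_Icc ha0 (hpos p).le <| chain_add_smul_apply_mem_Icc
          hmono.monotone hneg hl.le hpos ha0 (by simp only [p]; omega) htail
    _ < 1 := by linarith

/-- If `w_1 < w_2 < … < w_{n-1} < 0`, then `w` illuminates every element
`c^k` (ones in the first `k` coordinates) of the standard maximal chain. -/
theorem stmt12 (n : ℕ) (hn : 2 ≤ n) (w : Fin (n - 1) → ℝ)
    (hmono : StrictMono w) (hneg : ∀ i, w i < 0) :
    ∀ k : ℕ, 1 ≤ k → k ≤ n - 1 →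
      illum (n - 1) (Hnorm (n - 1)) w (fun i => if (i : ℕ) < k then 1 else 0) :=
  stmt12_general n w hmono hneg
end

section
/- Let n ≥ 2, let I be a nonempty proper subset of {1,…,n−1}, let x ∈ {0,1}^{n−1} be given by x_i = 1 for i ∈ I and x_i = 0 for i ∉ I, and let x' ∈ {0,−1}^{n−1} be given by x'_i = 0 for i ∈ I and x'_i = −1 for i ∉ I. If w ∈ ℝ^{n−1} satisfies w_i < 0 for all i ∈ I and w_i > 0 for all i ∉ I, then w illuminates both x and x' as boundary points of the unit ball B_H of ‖·‖_H. -/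
lemma hnormA {m : ℕ} [Nonempty (Fin m)] (z : Fin m → ℝ)
    (h0 : ∀ i, 0 ≤ z i) (h1 : ∀ i, z i < 1) : Hnorm m z < 1 := by
  unfold Hnorm
  have hs : (⨆ i, z i) < 1 := by
    obtain ⟨i, hi⟩ := exists_eq_ciSup_of_finite (f := z)
    rw [← hi]; exact h1 i
  have hi0 : (0:ℝ) ≤ ⨅ i, z i := le_ciInf h0
  rw [min_eq_right hi0]
  simpa using max_lt hs one_pos

lemma hnormB {m : ℕ} [Nonempty (Fin m)] (z : Fin m → ℝ)
    (h0 : ∀ i, z i ≤ 0) (h1 : ∀ i, -1 < z i) : Hnorm m z < 1 := by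
  unfold Hnorm
  have hinf : (-1:ℝ) < ⨅ i, z i := by
    obtain ⟨i, hi⟩ := exists_eq_ciInf_of_finite (f := z)
    rw [← hi]; exact h1 i
  have hsup : (⨆ i, z i) ≤ 0 := ciSup_le h0
  have hinfle : (⨅ i, z i) ≤ 0 := by
    obtain i := Classical.arbitrary (Fin m)
    exact le_trans (ciInf_le (Finite.bddBelow_range z) i) (h0 i)
  rw [max_eq_right hsup, min_eq_left hinfle]
  linarith

/-- For a nonempty proper `I ⊆ {1,…,n-1}`, a vector `w` with `w_i < 0`
on `I` and `w_i > 0` off `I` illuminates both `x` (indicator of `I`) and `x'`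
(minus the indicator of the complement of `I`). -/
theorem stmt13 (n : ℕ) (hn : 2 ≤ n) (I : Finset (Fin (n - 1)))
    (hI : I.Nonempty) (hIp : I ≠ Finset.univ) (w : Fin (n - 1) → ℝ)
    (hwI : ∀ i ∈ I, w i < 0) (hwIc : ∀ i ∉ I, 0 < w i) :
    illum (n - 1) (Hnorm (n - 1)) w (fun i => if i ∈ I then 1 else 0) ∧
    illum (n - 1) (Hnorm (n - 1)) w (fun i => if i ∈ I then 0 else -1) := by
  haveI : Nonempty (Fin (n - 1)) := Fin.pos_iff_nonempty.mp (by omega)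
  obtain ⟨M, hM0, hM⟩ : ∃ M : ℝ, 0 < M ∧ ∀ i, |w i| ≤ M := by
    obtain ⟨i0, hi0⟩ := exists_eq_ciSup_of_finite (f := fun i => |w i|)
    exact ⟨|w i0| + 1, by positivity,
      fun i => by
        have := le_ciSup (Finite.bddAbove_range (fun i => |w i|)) i
        rw [hi0] at *
        linarith⟩
  have hε : (0:ℝ) < 1 / (2 * M) := by positivity
  have key : ∀ l : ℝ, 0 < l → l < 1 / (2 * M) → ∀ i, |l * w i| < 1/2 := by
    intro l hl hlε i
    rw [abs_mul, abs_of_pos hl]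
    calc l * |w i| ≤ l * M := by nlinarith [hM i, abs_nonneg (w i)]
      _ < (1 / (2 * M)) * M := by nlinarith
      _ = 1/2 := by field_simp
  constructor
  · refine ⟨1 / (2 * M), hε, fun l hl hlε => ?_⟩
    apply hnormA
    · intro i
      have := key l hl hlε i
      have h' := abs_lt.mp this
      simp only [Pi.add_apply, Pi.smul_apply, smul_eq_mul]
      by_cases hi : i ∈ I <;> simp [hi]
      · linarith [h'.1]
      · exact le_of_lt (mul_pos hl (hwIc i hi))
    · intro i
      have h' := abs_lt.mp (key l hl hlε i)
      simp only [Pi.add_apply, Pi.smul_apply, smul_eq_mul]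
      by_cases hi : i ∈ I <;> simp [hi]
      · nlinarith [hwI i hi]
      · linarith [h'.2]
  · refine ⟨1 / (2 * M), hε, fun l hl hlε => ?_⟩
    apply hnormB
    · intro i
      have h' := abs_lt.mp (key l hl hlε i)
      simp only [Pi.add_apply, Pi.smul_apply, smul_eq_mul]
      by_cases hi : i ∈ I <;> simp [hi]
      · exact le_of_lt (mul_neg_of_pos_of_neg hl (hwI i hi))
      · linarith [h'.2]
    · intro i
      have h' := abs_lt.mp (key l hl hlε i)
      simp only [Pi.add_apply, Pi.smul_apply, smul_eq_mul]
      by_cases hi : i ∈ I <;> simp [hi]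
      · linarith [h'.1]
      · nlinarith [hwIc i hi]
end

section
/- Let n ≥ 1 and let f : ℝⁿ_{>0} → ℝⁿ_{>0} be an order-preserving homogeneous map. Then f is nonexpansive with respect to Hilbert's metric: d_H(f(x), f(y)) ≤ d_H(x, y) for all x, y ∈ ℝⁿ_{>0}. -/
/-- Order-preserving homogeneous maps on the open positive cone are
nonexpansive for Hilbert's metric. -/
theorem stmt14 (n : ℕ) (hn : 1 ≤ n) (f : (Fin n → ℝ) → (Fin n → ℝ))
    (hpos : ∀ x : Fin n → ℝ, (∀ i, 0 < x i) → ∀ i, 0 < f x i)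
    (hmono : ∀ x y : Fin n → ℝ, (∀ i, 0 < x i) → (∀ i, 0 < y i) → x ≤ y → f x ≤ f y)
    (hhom : ∀ c : ℝ, 0 < c → ∀ x : Fin n → ℝ, (∀ i, 0 < x i) → f (c • x) = c • f x) :
    ∀ x y : Fin n → ℝ, (∀ i, 0 < x i) → (∀ i, 0 < y i) →
      dH n (f x) (f y) ≤ dH n x y := by
  intro x y hx hy
  haveI : Nonempty (Fin n) := Fin.pos_iff_nonempty.mp hn
  set M := ⨆ i, x i / y i with hM
  set m := ⨅ i, x i / y i with hm
  have hbA : ∀ (g : Fin n → ℝ), BddAbove (Set.range g) := fun g => (Set.finite_range g).bddAbove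
  have hbB : ∀ (g : Fin n → ℝ), BddBelow (Set.range g) := fun g => (Set.finite_range g).bddBelow
  have hmpos : 0 < m := by
    obtain ⟨i, hi⟩ := exists_eq_ciInf_of_finite (f := fun i => x i / y i)
    rw [hm, ← hi]; exact div_pos (hx i) (hy i)
  have hmM : m ≤ M := by
    have h1 : m ≤ x (Classical.arbitrary _) / y (Classical.arbitrary _) := ciInf_le (hbB _) _
    have h2 : x (Classical.arbitrary _) / y (Classical.arbitrary _) ≤ M := by rw [hM]; exact le_ciSup (f := fun i => x i / y i) (hbA _) _
    linarith
  have hMpos : 0 < M := lt_of_lt_of_le hmpos hmM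
  have hxM : x ≤ M • y := by
    intro i
    have h : x i / y i ≤ M := by rw [hM]; exact le_ciSup (f := fun i => x i / y i) (hbA _) i
    have h2 := (div_le_iff₀ (hy i)).mp h
    simpa [mul_comm] using h2
  have hmx : m • y ≤ x := by
    intro i
    have h : m ≤ x i / y i := ciInf_le (hbB _) i
    have h2 := (le_div_iff₀ (hy i)).mp h
    simpa [mul_comm] using h2
  have hfy := hpos y hy
  have h1 : f x ≤ M • f y := by
    calc f x ≤ f (M • y) := hmono x (M • y) hx (fun i => by have h1 := hy i; have h2 := hMpos; simp only [Pi.smul_apply, smul_eq_mul]; positivity) hxM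
    _ = M • f y := hhom M hMpos y hy
  have h2 : m • f y ≤ f x := by
    calc m • f y = f (m • y) := (hhom m hmpos y hy).symm
    _ ≤ f x := hmono (m • y) x (fun i => by have h1 := hy i; have h2 := hmpos; simp only [Pi.smul_apply, smul_eq_mul]; positivity) hx hmx
  have hsup : (⨆ i, f x i / f y i) ≤ M :=
    ciSup_le fun i => (div_le_iff₀ (hfy i)).mpr (by simpa [mul_comm] using h1 i)
  have hinf : m ≤ ⨅ i, f x i / f y i :=
    le_ciInf fun i => (le_div_iff₀ (hfy i)).mpr (by simpa [mul_comm] using h2 i)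
  have hinfpos : 0 < ⨅ i, f x i / f y i := lt_of_lt_of_le hmpos hinf
  have hsuppos : 0 < ⨆ i, f x i / f y i := by
    have h2 : f x (Classical.arbitrary _) / f y (Classical.arbitrary _) ≤ ⨆ i, f x i / f y i :=
      le_ciSup (f := fun i => f x i / f y i) (hbA _) _
    have h1 : 0 < f x (Classical.arbitrary _) / f y (Classical.arbitrary _) :=
      div_pos (hpos x hx _) (hfy _)
    linarith
  unfold dH
  have l1 : Real.log (⨆ i, f x i / f y i) ≤ Real.log M := Real.log_le_log hsuppos hsup
  have l2 : Real.log m ≤ Real.log (⨅ i, f x i / f y i) := Real.log_le_log hmpos hinf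
  linarith
end

section
/- Let n ≥ 1 and let f : ℝⁿ_{>0} → ℝⁿ_{>0} be an order-preserving homogeneous map. If x, y ∈ ℝⁿ_{>0} and λ, μ > 0 are such that f(x) = λx and f(y) = μy, then λ = μ. -/
private lemma stmt15_aux (n : ℕ) (hn : 1 ≤ n) (f : (Fin n → ℝ) → (Fin n → ℝ))
    (hmono : ∀ x y : Fin n → ℝ, (∀ i, 0 < x i) → (∀ i, 0 < y i) → x ≤ y → f x ≤ f y)
    (hhom : ∀ c : ℝ, 0 < c → ∀ x : Fin n → ℝ, (∀ i, 0 < x i) → f (c • x) = c • f x)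
    (x y : Fin n → ℝ) (hx : ∀ i, 0 < x i) (hy : ∀ i, 0 < y i)
    (lam mu : ℝ) (hlam : 0 < lam) (hmu : 0 < mu)
    (hfx : f x = lam • x) (hfy : f y = mu • y) :
    lam ≤ mu := by
  have hne : Nonempty (Fin n) := ⟨⟨0, hn⟩⟩
  have hne' : (Finset.univ : Finset (Fin n)).Nonempty := Finset.univ_nonempty
  set t : ℝ := Finset.univ.inf' hne' (fun i => y i / x i) with ht
  have ht0 : 0 < t := by
    rw [ht, Finset.lt_inf'_iff]
    exact fun i _ => div_pos (hy i) (hx i)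
  have htx : ∀ i, t * x i ≤ y i := by
    intro i
    have := Finset.inf'_le (fun i => y i / x i) (Finset.mem_univ i)
    rw [← ht] at this
    calc t * x i ≤ (y i / x i) * x i := by
            exact mul_le_mul_of_nonneg_right this (le_of_lt (hx i))
      _ = y i := div_mul_cancel₀ _ (ne_of_gt (hx i))
  -- key induction
  have key : ∀ k : ℕ, ∀ i, (lam ^ k * t) * x i ≤ mu ^ k * y i := by
    intro k
    induction k with
    | zero => simpa using htx
    | succ k ih =>
      have hpk1 : 0 < lam ^ k * t := mul_pos (pow_pos hlam k) ht0
      have hpk2 : 0 < mu ^ k := pow_pos hmu k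
      have hx' : ∀ i, 0 < ((lam ^ k * t) • x) i := fun i => by
        simpa using mul_pos hpk1 (hx i)
      have hy' : ∀ i, 0 < ((mu ^ k : ℝ) • y) i := fun i => by
        simpa using mul_pos hpk2 (hy i)
      have hle : (lam ^ k * t) • x ≤ (mu ^ k : ℝ) • y := fun i => by
        simpa using ih i
      have := hmono ((lam ^ k * t) • x) ((mu ^ k : ℝ) • y) hx' hy' hle
      rw [hhom _ hpk1 x hx, hhom _ hpk2 y hy, hfx, hfy] at this
      intro i
      have hi := this i
      simp only [Pi.smul_apply, smul_eq_mul] at hi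
      calc (lam ^ (k + 1) * t) * x i = (lam ^ k * t) * (lam * x i) := by ring
        _ ≤ mu ^ k * (mu * y i) := hi
        _ = mu ^ (k + 1) * y i := by ring
  by_contra hlt
  push_neg at hlt
  have hr : 1 < lam / mu := (one_lt_div hmu).mpr hlt
  set i0 : Fin n := ⟨0, hn⟩
  obtain ⟨k, hk⟩ := pow_unbounded_of_one_lt (y i0 / (t * x i0)) hr
  have h1 : (lam / mu) ^ k ≤ y i0 / (t * x i0) := by
    have hki := key k i0
    rw [div_pow, div_le_div_iff₀ (pow_pos hmu k) (mul_pos ht0 (hx i0))]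
    calc lam ^ k * (t * x i0) = (lam ^ k * t) * x i0 := by ring
      _ ≤ mu ^ k * y i0 := hki
      _ = y i0 * mu ^ k := by ring
  exact absurd h1 (not_le.mpr hk)

/-- Any two positive eigenvectors of an order-preserving homogeneous map
on the open positive cone have the same eigenvalue. -/
theorem stmt15 (n : ℕ) (hn : 1 ≤ n) (f : (Fin n → ℝ) → (Fin n → ℝ))
    (hpos : ∀ x : Fin n → ℝ, (∀ i, 0 < x i) → ∀ i, 0 < f x i)
    (hmono : ∀ x y : Fin n → ℝ, (∀ i, 0 < x i) → (∀ i, 0 < y i) → x ≤ y → f x ≤ f y)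
    (hhom : ∀ c : ℝ, 0 < c → ∀ x : Fin n → ℝ, (∀ i, 0 < x i) → f (c • x) = c • f x)
    (x y : Fin n → ℝ) (hx : ∀ i, 0 < x i) (hy : ∀ i, 0 < y i)
    (lam mu : ℝ) (hlam : 0 < lam) (hmu : 0 < mu)
    (hfx : f x = lam • x) (hfy : f y = mu • y) :
    lam = mu := by
  exact le_antisymm
    (stmt15_aux n hn f hmono hhom x y hx hy lam mu hlam hmu hfx hfy)
    (stmt15_aux n hn f hmono hhom y x hy hx mu lam hmu hlam hfy hfx)
end

section
/- Let C be a compact convex set with nonempty interior in a finite-dimensional real normed vector space V, and let S ⊆ V. If every extreme point of C is illuminated by some element of S, then S illuminates C: every boundary point of C is illuminated by some element of S. -/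
/-!
The points of `C` from which a single step along some direction of `S` enters `interior C`
form an open set `W`, and for convex `C` such a step can be shortened at will, so
`W ∩ C` is exactly the set of points of `C` illuminated by `S`. If `x` lies in an open segment
of `C` with endpoint `x₁ ∈ W`, then a step from `x` enters the interior as well (a convex
combination of an interior point with a point of `C` is interior), so `C \ W` is a compact
extreme subset of `C`. Were it nonempty, by Krein–Milman it would have an extreme point, which
is then an extreme point of `C` outside `W`, contradicting the hypothesis.
-/

open Set

section

variable {E : Type*} [AddCommGroup E] [Module ℝ E] [TopologicalSpace E]

/-- Unlike illumination, only one step `x + ε • v` into the interior is required. -/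
def weaklyIlluminatedSet (C S : Set E) : Set E :=
  {x | ∃ v ∈ S, ∃ ε > (0 : ℝ), x + ε • v ∈ interior C}

theorem isOpen_weaklyIlluminatedSet [ContinuousAdd E] (C S : Set E) :
    IsOpen (weaklyIlluminatedSet C S) := by
  have hW : weaklyIlluminatedSet C S = ⋃ v ∈ S, ⋃ ε > (0 : ℝ), (· + ε • v) ⁻¹' interior C := by
    ext x
    simp [weaklyIlluminatedSet]
  rw [hW]
  exact isOpen_biUnion fun v _ ↦ isOpen_biUnion fun ε _ ↦
    isOpen_interior.preimage (continuous_add_const _)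

variable [IsTopologicalAddGroup E] [ContinuousConstSMul ℝ E] {C : Set E}

theorem Convex.add_smul_mem_interior_of_le (hC : Convex ℝ C) {z v : E} {ε l : ℝ} (hz : z ∈ C)
    (hε : 0 < ε) (h : z + ε • v ∈ interior C) (hl : 0 < l) (hlε : l ≤ ε) :
    z + l • v ∈ interior C := by
  have hstep := hC.add_smul_mem_interior hz h ⟨div_pos hl hε, (div_le_one hε).2 hlε⟩
  rwa [smul_smul, div_mul_cancel₀ _ hε.ne'] at hstep

theorem Convex.isExtreme_diff_weaklyIlluminatedSet (hC : Convex ℝ C) (S : Set E) :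
    IsExtreme ℝ C (C \ weaklyIlluminatedSet C S) := by
  refine ⟨sdiff_subset, ?_⟩
  rintro x₁ hx₁ x₂ hx₂ x ⟨-, hx⟩ hseg
  refine ⟨hx₁, fun ⟨v, hv, ε, hε, h⟩ ↦ hx ?_⟩
  rw [openSegment_eq_image₂] at hseg
  obtain ⟨⟨a, b⟩, ⟨ha, hb, hab⟩, rfl⟩ := hseg
  refine ⟨v, hv, a * ε, mul_pos ha hε, ?_⟩
  convert hC.combo_interior_self_mem_interior h hx₂ ha hb.le hab using 1
  module

end

theorem IsCompact.subset_of_isExtreme_diff {E : Type*} [AddCommGroup E] [Module ℝ E]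
    [TopologicalSpace E] [T2Space E] [IsTopologicalAddGroup E] [ContinuousSMul ℝ E]
    [LocallyConvexSpace ℝ E] {C U : Set E} (hC : IsCompact C) (hU : IsOpen U)
    (hext : C.extremePoints ℝ ⊆ U) (hCU : IsExtreme ℝ C (C \ U)) : C ⊆ U := by
  by_contra hne
  obtain ⟨y, hy⟩ := (hC.diff hU).extremePoints_nonempty (sdiff_nonempty.2 hne)
  exact hy.1.2 (hext (hCU.extremePoints_subset_extremePoints hy))

theorem stmt17_general (V : Type*) [NormedAddCommGroup V] [NormedSpace ℝ V]
    (C : Set V) (hC : IsCompact C) (hconv : Convex ℝ C)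
    (S : Set V)
    (hS : ∀ z ∈ Set.extremePoints ℝ C, ∃ v ∈ S, ∃ ε > 0,
      ∀ l : ℝ, 0 < l → l < ε → z + l • v ∈ interior C) :
    ∀ z ∈ frontier C, ∃ v ∈ S, ∃ ε > 0,
      ∀ l : ℝ, 0 < l → l < ε → z + l • v ∈ interior C := by
  have hext : C.extremePoints ℝ ⊆ weaklyIlluminatedSet C S := fun z hz ↦ by
    obtain ⟨v, hv, ε, hε, h⟩ := hS z hz
    exact ⟨v, hv, ε / 2, half_pos hε, h _ (half_pos hε) (half_lt_self hε)⟩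
  have hCW : C ⊆ weaklyIlluminatedSet C S :=
    hC.subset_of_isExtreme_diff (isOpen_weaklyIlluminatedSet C S) hext
      (hconv.isExtreme_diff_weaklyIlluminatedSet S)
  intro z hz
  have hzC : z ∈ C := hC.isClosed.frontier_subset hz
  obtain ⟨v, hv, ε, hε, h⟩ := hCW hzC
  exact ⟨v, hv, ε, hε, fun l hl hlε ↦ hconv.add_smul_mem_interior_of_le hzC hε h hl hlε.le⟩

/-- If a set `S` illuminates every extreme point of a compact convex body
`C` in a finite-dimensional real normed space, then `S` illuminates all of `∂C`. -/
theorem stmt17 (V : Type*) [NormedAddCommGroup V] [NormedSpace ℝ V] [FiniteDimensional ℝ V]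
    (C : Set V) (hC : IsCompact C) (hconv : Convex ℝ C) (hint : (interior C).Nonempty)
    (S : Set V)
    (hS : ∀ z ∈ Set.extremePoints ℝ C, ∃ v ∈ S, ∃ ε > 0,
      ∀ l : ℝ, 0 < l → l < ε → z + l • v ∈ interior C) :
    ∀ z ∈ frontier C, ∃ v ∈ S, ∃ ε > 0,
      ∀ l : ℝ, 0 < l → l < ε → z + l • v ∈ interior C :=
  stmt17_general V C hC hconv S hS
end
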